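/- arXiv:2202.00992 — 10 statements merged into one kernel-verified Lean document; each statement's English description precedes it below -/
import Mathlib

section
/- Let ζ>0 and 0<α<2. Let ρ be a finite Borel measure on [0,1] such that lim_{λ→0+} ρ([0,λ])/λ^ζ = 1. For n ∈ ℕ define the gradient-descent loss L_n = (1/2)∫_{[0,1]} (1-αλ)^{2n} ρ(dλ). Then lim_{n→∞} (2αn)^ζ · L_n = Γ(ζ+1)/2, where Γ is the real Gamma function. -/
open MeasureTheory Filter Set Topology

/-!
Write `F u = ρ([0,u])`. Integrating by parts against `ρ`, the loss integral
`∫_{[0,1]} (1-αλ)^{2n} dρ` equals the boundary term `(1-α)^{2n} ρ([0,1])`, which decays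
geometrically because `|1-α| < 1`, plus `∫₀¹ 2nα (1-αu)^{2n-1} F u du`. After the substitution
`s = 2αn u` and multiplication by `(2αn)^ζ`, the integrand tends to `s^ζ e^{-s}`, since
`F u ~ u^ζ` and `(1 - s/(2n))^{2n-1} → e^{-s}`. The bound `|1-αu| ≤ e^{-cu}` with
`c = min α (2-α)` dominates it by `C s^ζ e^{-cs/(2α)}`, and dominated convergence yields
`∫₀^∞ s^ζ e^{-s} ds = Γ(ζ+1)`.
-/

section Stieltjes

variable {ρ : Measure ℝ} [IsFiniteMeasure ρ] {a b : ℝ}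

/-- Both sides are the integral of `1_{x ≤ u} f u` over `[a,b]²` against `ρ ⊗ volume`. -/
theorem setIntegral_intervalIntegral_eq_intervalIntegral_mul_measureReal_Icc {f : ℝ → ℝ}
    (hab : a ≤ b) (hf : IntegrableOn f (Icc a b)) :
    ∫ x in Icc a b, (∫ u in x..b, f u) ∂ρ = ∫ u in a..b, f u * ρ.real (Icc a u) := by
  set μ := ρ.restrict (Icc a b)
  set ν := volume.restrict (Icc a b)
  set T : Set (ℝ × ℝ) := {p | p.1 ≤ p.2}
  have hT : MeasurableSet T := measurableSet_le measurable_fst measurable_snd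
  have hint : Integrable (T.indicator fun p => f p.2) (μ.prod ν) :=
    (hf.comp_snd μ).indicator hT
  have hswap := integral_integral_swap (f := fun x u => T.indicator (fun p => f p.2) (x, u)) hint
  have hx : ∀ x ∈ Icc a b, ∫ u, T.indicator (fun p => f p.2) (x, u) ∂ν = ∫ u in x..b, f u := by
    intro x hx
    have hslice : (fun u => T.indicator (fun p => f p.2) (x, u)) = (Ici x).indicator f := by
      ext u; by_cases h : x ≤ u <;> simp [T, indicator, h]
    have hIcc : Icc a b ∩ Ici x = Icc x b := by
      ext u; simp only [mem_inter_iff, mem_Icc, mem_Ici]; grind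
    rw [hslice, setIntegral_indicator measurableSet_Ici, hIcc, intervalIntegral.integral_of_le hx.2,
      integral_Icc_eq_integral_Ioc]
  have hu : ∀ u ∈ Icc a b,
      ∫ x, T.indicator (fun p => f p.2) (x, u) ∂μ = f u * ρ.real (Icc a u) := by
    intro u hu
    have hslice : (fun x => T.indicator (fun p => f p.2) (x, u)) =
        (Iic u).indicator fun _ => f u := by
      ext x; by_cases h : x ≤ u <;> simp [T, indicator, h]
    have hIcc : Icc a b ∩ Iic u = Icc a u := by
      ext x; simp only [mem_inter_iff, mem_Icc, mem_Iic]; grind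
    rw [hslice, setIntegral_indicator measurableSet_Iic, setIntegral_const, hIcc, smul_eq_mul,
      mul_comm]
  rw [← setIntegral_congr_fun measurableSet_Icc hx, hswap, intervalIntegral.integral_of_le hab,
    ← integral_Icc_eq_integral_Ioc]
  exact setIntegral_congr_fun measurableSet_Icc hu

theorem setIntegral_Icc_eq_mul_measureReal_sub_intervalIntegral_deriv_mul {g g' : ℝ → ℝ}
    (hab : a ≤ b) (hg : ∀ u ∈ Icc a b, HasDerivAt g (g' u) u) (hg' : IntegrableOn g' (Icc a b)) :
    ∫ x in Icc a b, g x ∂ρ = g b * ρ.real (Icc a b) - ∫ u in a..b, g' u * ρ.real (Icc a u) := by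
  have hftc : ∀ x ∈ Icc a b, g x = g b - ∫ u in x..b, g' u := by
    intro x hx
    rw [intervalIntegral.integral_eq_sub_of_hasDerivAt (fun u hu => hg u ?_)
      ((intervalIntegrable_iff_integrableOn_Icc_of_le hx.2).2
        (hg'.mono_set (Icc_subset_Icc_left hx.1)))]
    · ring
    rw [uIcc_of_le hx.2] at hu
    exact ⟨hx.1.trans hu.1, hu.2⟩
  have hcont : ContinuousOn g (Icc a b) := fun u hu => (hg u hu).continuousAt.continuousWithinAt
  have hint : IntegrableOn (fun x => ∫ u in x..b, g' u) (Icc a b) ρ :=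
    ((integrableOn_const (C := g b) (measure_ne_top _ _)).sub
      (hcont.integrableOn_compact isCompact_Icc)).congr_fun
      (fun x hx => by simp only [Pi.sub_apply]; rw [hftc x hx]; ring) measurableSet_Icc
  rw [setIntegral_congr_fun measurableSet_Icc hftc, integral_sub (integrable_const _) hint,
    setIntegral_const, smul_eq_mul, mul_comm,
    setIntegral_intervalIntegral_eq_intervalIntegral_mul_measureReal_Icc hab hg']

end Stieltjes

theorem setIntegral_Icc_one_sub_mul_pow (ρ : Measure ℝ) [IsFiniteMeasure ρ] (α : ℝ) (m : ℕ) :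
    ∫ l in Icc (0:ℝ) 1, (1 - α * l) ^ m ∂ρ = (1 - α) ^ m * ρ.real (Icc 0 1) +
      ∫ u in (0:ℝ)..1, m * α * (1 - α * u) ^ (m - 1) * ρ.real (Icc 0 u) := by
  have hderiv : ∀ u : ℝ, HasDerivAt (fun l => (1 - α * l) ^ m)
      (-(m * α * (1 - α * u) ^ (m - 1))) u := fun u => by
    refine ((((hasDerivAt_id' u).const_mul α).const_sub 1).fun_pow m).congr_deriv ?_
    ring
  rw [setIntegral_Icc_eq_mul_measureReal_sub_intervalIntegral_deriv_mul zero_le_one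
    (fun u _ => hderiv u) (Continuous.integrableOn_Icc (by fun_prop))]
  simp only [mul_one, neg_mul, intervalIntegral.integral_neg, sub_neg_eq_add]

theorem tendsto_rpow_mul_pow_of_abs_lt_one (s : ℝ) {r : ℝ} (hr : |r| < 1) :
    Tendsto (fun n : ℕ => (n : ℝ) ^ s * r ^ n) atTop (𝓝 0) := by
  refine squeeze_zero_norm' ?_ (tendsto_pow_const_mul_const_pow_of_abs_lt_one ⌈s⌉₊
    (r := |r|) (by rwa [abs_abs]))
  filter_upwards [eventually_ge_atTop 1] with n hn
  have hn1 : (1 : ℝ) ≤ n := by exact_mod_cast hn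
  rw [norm_mul, norm_pow, Real.norm_eq_abs, Real.norm_eq_abs,
    abs_of_nonneg (Real.rpow_nonneg (Nat.cast_nonneg n) s)]
  have hpow := Real.rpow_le_rpow_of_exponent_le hn1 (Nat.le_ceil s)
  rw [Real.rpow_natCast] at hpow
  exact mul_le_mul_of_nonneg_right hpow (by positivity)

theorem tendsto_rpow_mul_one_sub_pow_two_mul {α : ℝ} (ζ M : ℝ) (hα0 : 0 < α) (hα2 : α < 2) :
    Tendsto (fun n : ℕ => (2 * α * n) ^ ζ * ((1 - α) ^ (2 * n) * M)) atTop (𝓝 0) := by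
  have hr : |(1 - α) ^ 2| < 1 := by rw [abs_of_nonneg (sq_nonneg _)]; nlinarith
  have h := (tendsto_rpow_mul_pow_of_abs_lt_one ζ hr).const_mul ((2 * α) ^ ζ * M)
  rw [mul_zero] at h
  refine h.congr fun n => ?_
  rw [Real.mul_rpow (by positivity) (Nat.cast_nonneg n), pow_mul]
  ring

theorem tendsto_one_sub_div_pow_pred (s : ℝ) :
    Tendsto (fun m : ℕ => (1 - s / m) ^ (m - 1)) atTop (𝓝 (Real.exp (-s))) := by
  have hbase : Tendsto (fun m : ℕ => 1 - s / m) atTop (𝓝 1) := by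
    simpa using tendsto_const_nhds.sub (tendsto_const_div_atTop_nhds_zero_nat s)
  have hpow : Tendsto (fun m : ℕ => (1 - s / m) ^ m) atTop (𝓝 (Real.exp (-s))) := by
    simpa [sub_eq_add_neg, neg_div] using Real.tendsto_one_add_div_pow_exp (-s)
  refine (div_one (Real.exp (-s)) ▸ hpow.div hbase one_ne_zero).congr' ?_
  filter_upwards [hbase.eventually_ne one_ne_zero, eventually_ge_atTop 1] with m hm hm1
  rw [Pi.div_apply, div_eq_iff hm, ← pow_succ, Nat.sub_add_cancel hm1]

theorem tendsto_rpow_mul_comp_div_atTop {F : ℝ → ℝ} {ζ L s : ℝ} (hs : 0 < s)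
    (hF : Tendsto (fun l => F l / l ^ ζ) (𝓝[>] 0) (𝓝 L)) :
    Tendsto (fun t => t ^ ζ * F (s / t)) atTop (𝓝 (L * s ^ ζ)) := by
  have hdiv : Tendsto (fun t : ℝ => s / t) atTop (𝓝[>] 0) :=
    tendsto_nhdsWithin_iff.2 ⟨tendsto_const_nhds.div_atTop tendsto_id,
      (eventually_gt_atTop 0).mono fun t ht => div_pos hs ht⟩
  refine ((hF.comp hdiv).mul_const (s ^ ζ)).congr' ?_
  filter_upwards [eventually_gt_atTop 0] with t ht
  have hst : 0 < (s / t) ^ ζ := Real.rpow_pos_of_pos (div_pos hs ht) ζ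
  rw [Function.comp_apply, div_mul_eq_mul_div, div_eq_iff hst.ne',
    Real.div_rpow hs.le ht.le]
  field_simp

theorem exists_abs_le_mul_rpow_of_tendsto {F : ℝ → ℝ} {ζ L M : ℝ} (hζ : 0 ≤ ζ)
    (hM : ∀ u, |F u| ≤ M) (hF : Tendsto (fun l => F l / l ^ ζ) (𝓝[>] 0) (𝓝 L)) :
    ∃ C, ∀ l, 0 < l → |F l| ≤ C * l ^ ζ := by
  obtain ⟨δ, hδ, hnear⟩ := mem_nhdsGT_iff_exists_Ioc_subset.1
    (hF.abs.eventually_lt_const (lt_add_one |L|))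
  have hδζ : 0 < δ ^ ζ := Real.rpow_pos_of_pos hδ ζ
  refine ⟨max (|L| + 1) (M / δ ^ ζ), fun l hl => ?_⟩
  have hlζ : 0 < l ^ ζ := Real.rpow_pos_of_pos hl ζ
  rcases le_or_gt l δ with hlδ | hδl
  · have h := hnear ⟨hl, hlδ⟩
    simp only [mem_ofPred_eq, abs_div, abs_of_pos hlζ, div_lt_iff₀ hlζ] at h
    exact h.le.trans (by gcongr; exact le_max_left _ _)
  · calc |F l| ≤ M / δ ^ ζ * δ ^ ζ := by rw [div_mul_cancel₀ _ hδζ.ne']; exact hM l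
      _ ≤ max (|L| + 1) (M / δ ^ ζ) * l ^ ζ := by
        have hM0 : 0 ≤ M / δ ^ ζ := div_nonneg ((abs_nonneg _).trans (hM 0)) hδζ.le
        exact mul_le_mul (le_max_right _ _) (Real.rpow_le_rpow hδ.le hδl.le hζ) hδζ.le
          (hM0.trans (le_max_right _ _))

theorem abs_one_sub_mul_pow_le_exp {α u : ℝ} (hu : u ∈ Icc (0:ℝ) 1) (m : ℕ) :
    |1 - α * u| ^ m ≤ Real.exp (-(min α (2 - α) * u * m)) := by
  set c := min α (2 - α)
  have hcα : c ≤ α := min_le_left _ _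
  have hc2 : c ≤ 2 - α := min_le_right _ _
  have habs : |1 - α * u| ≤ 1 - c * u := by
    rw [abs_le]
    constructor <;> nlinarith [hu.1, hu.2]
  calc |1 - α * u| ^ m ≤ Real.exp (-(c * u)) ^ m := by
        gcongr
        linarith [Real.add_one_le_exp (-(c * u))]
    _ = Real.exp (-(c * u * m)) := by rw [← Real.exp_nat_mul]; ring_nf

noncomputable def rescaledLossIntegrand (α ζ : ℝ) (F : ℝ → ℝ) (n : ℕ) : ℝ → ℝ :=
  (Ioc 0 (2 * α * n)).indicator fun s =>
    (2 * α * n) ^ ζ * ((1 - α * (s / (2 * α * n))) ^ (2 * n - 1) * F (s / (2 * α * n)))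

section Rescaled

variable {α ζ : ℝ} {F : ℝ → ℝ}

theorem integral_rescaledLossIntegrand (hα : 0 < α) (n : ℕ) :
    ∫ s, rescaledLossIntegrand α ζ F n s =
      (2 * α * n) ^ ζ * ∫ u in (0:ℝ)..1, 2 * n * α * (1 - α * u) ^ (2 * n - 1) * F u := by
  rcases n.eq_zero_or_pos with rfl | hn
  · simp [rescaledLossIntegrand]
  have ht : (0:ℝ) < 2 * α * n := by positivity
  rw [rescaledLossIntegrand, integral_indicator measurableSet_Ioc,
    ← intervalIntegral.integral_of_le ht.le, intervalIntegral.integral_const_mul,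
    intervalIntegral.integral_comp_div (fun u => (1 - α * u) ^ (2 * n - 1) * F u) ht.ne',
    zero_div, div_self ht.ne', smul_eq_mul, ← intervalIntegral.integral_const_mul]
  congr 2 with u
  ring

theorem abs_rescaledLossIntegrand_le {C : ℝ} (hα0 : 0 < α) (hα2 : α ≤ 2)
    (hC : ∀ l, 0 < l → |F l| ≤ C * l ^ ζ) (n : ℕ) (s : ℝ) :
    |rescaledLossIntegrand α ζ F n s| ≤
      (Ioi 0).indicator (fun s => C * (s ^ ζ * Real.exp (-(min α (2 - α) / (2 * α)) * s))) s := by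
  have hC0 : 0 ≤ C := by simpa using (abs_nonneg _).trans (hC 1 one_pos)
  by_cases hs : s ∈ Ioc 0 (2 * α * n)
  swap
  · rw [rescaledLossIntegrand, indicator_of_notMem hs, abs_zero]
    exact indicator_nonneg (fun x (hx : 0 < x) => by positivity) s
  have hn : 1 ≤ n := by
    rcases n.eq_zero_or_pos with rfl | h
    · simp at hs
    · exact h
  rw [rescaledLossIntegrand, indicator_of_mem hs, indicator_of_mem (show s ∈ Ioi 0 from hs.1),
    abs_mul, abs_mul, abs_pow]
  set c := min α (2 - α)
  set t : ℝ := 2 * α * n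
  have ht : 0 < t := hs.1.trans_le hs.2
  have hu : s / t ∈ Icc (0:ℝ) 1 := ⟨div_nonneg hs.1.le ht.le, (div_le_one ht).2 hs.2⟩
  have hc : 0 ≤ c := le_min hα0.le (by linarith)
  rw [abs_of_pos (Real.rpow_pos_of_pos ht ζ)]
  calc t ^ ζ * (|1 - α * (s / t)| ^ (2 * n - 1) * |F (s / t)|)
      ≤ t ^ ζ * (Real.exp (-(c * (s / t) * ((2 * n - 1 : ℕ) : ℝ))) * (C * (s / t) ^ ζ)) := by
        gcongr
        · exact abs_one_sub_mul_pow_le_exp hu _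
        · exact hC _ (div_pos hs.1 ht)
    _ = C * ((t * (s / t)) ^ ζ * Real.exp (-(c * (s / t) * ((2 * n - 1 : ℕ) : ℝ)))) := by
        rw [Real.mul_rpow ht.le hu.1]; ring
    _ ≤ C * (s ^ ζ * Real.exp (-(c / (2 * α)) * s)) := by
        rw [mul_div_cancel₀ _ ht.ne']
        have hexp : c / (2 * α) * s = c * (s / t) * n := by simp only [t]; field_simp
        rw [neg_mul, hexp]
        gcongr
        · exact Real.rpow_nonneg hs.1.le ζ
        · exact mul_nonneg hc hu.1
        · omega

theorem tendsto_rescaledLossIntegrand {L : ℝ} (hα : 0 < α)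
    (hF : Tendsto (fun l => F l / l ^ ζ) (𝓝[>] 0) (𝓝 L)) (s : ℝ) :
    Tendsto (fun n : ℕ => rescaledLossIntegrand α ζ F n s) atTop
      (𝓝 ((Ioi 0).indicator (fun s => L * (s ^ ζ * Real.exp (-s))) s)) := by
  rcases le_or_gt s 0 with hs | hs
  · have h0 : ∀ n : ℕ, rescaledLossIntegrand α ζ F n s = 0 :=
      fun n => indicator_of_notMem (fun h => (not_lt.2 hs) h.1) _
    simp only [h0, indicator_of_notMem (show s ∉ Ioi 0 from not_lt.2 hs)]
    exact tendsto_const_nhds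
  rw [indicator_of_mem (show s ∈ Ioi 0 from hs), ← mul_assoc]
  have ht : Tendsto (fun n : ℕ => 2 * α * n) atTop atTop :=
    tendsto_natCast_atTop_atTop.const_mul_atTop (by positivity)
  have h2n : Tendsto (fun n : ℕ => 2 * n) atTop atTop :=
    tendsto_atTop_mono (fun n => Nat.le_mul_of_pos_left n two_pos) tendsto_id
  refine (((tendsto_rpow_mul_comp_div_atTop hs hF).comp ht).mul
    ((tendsto_one_sub_div_pow_pred s).comp h2n)).congr' ?_
  filter_upwards [ht.eventually_ge_atTop s, eventually_ge_atTop 1] with n hn hn1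
  have hαs : α * (s / (2 * α * n)) = s / (2 * n) := by field_simp
  rw [Function.comp_apply, Function.comp_apply, rescaledLossIntegrand,
    indicator_of_mem (show s ∈ Ioc 0 (2 * α * n) from ⟨hs, hn⟩), hαs]
  push_cast
  ring

theorem tendsto_integral_rescaledLossIntegrand {L M : ℝ} (hζ : 0 ≤ ζ) (hα0 : 0 < α) (hα2 : α < 2)
    (hFm : Measurable F) (hM : ∀ u, |F u| ≤ M)
    (hF : Tendsto (fun l => F l / l ^ ζ) (𝓝[>] 0) (𝓝 L)) :
    Tendsto (fun n : ℕ => ∫ s, rescaledLossIntegrand α ζ F n s) atTop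
      (𝓝 (L * Real.Gamma (ζ + 1))) := by
  obtain ⟨C, hC⟩ := exists_abs_le_mul_rpow_of_tendsto hζ hM hF
  have hb : 0 < min α (2 - α) / (2 * α) := by
    have : 0 < min α (2 - α) := lt_min hα0 (by linarith)
    positivity
  have hGamma : ∫ s, (Ioi 0).indicator (fun s => L * (s ^ ζ * Real.exp (-s))) s =
      L * Real.Gamma (ζ + 1) := by
    rw [integral_indicator measurableSet_Ioi, integral_const_mul,
      Real.Gamma_eq_integral (by linarith), add_sub_cancel_right]
    simp_rw [mul_comm (_ ^ ζ)]
  rw [← hGamma]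
  refine tendsto_integral_of_dominated_convergence _ (fun n => ?_) ?_
    (fun n => .of_forall (abs_rescaledLossIntegrand_le hα0 hα2.le hC n))
    (.of_forall (tendsto_rescaledLossIntegrand hα0 hF))
  · exact (Measurable.indicator (by fun_prop) measurableSet_Ioc).aestronglyMeasurable
  · refine (integrable_indicator_iff measurableSet_Ioi).2 (Integrable.const_mul ?_ C)
    have h := integrableOn_rpow_mul_exp_neg_mul_rpow (s := ζ) (by linarith) one_pos hb
    simp only [Real.rpow_one] at h
    exact h

end Rescaled

theorem gd_constant_rate_loss_asymptotic_general
    (ζ α : ℝ) (hζ : 0 < ζ) (hα0 : 0 < α) (hα2 : α < 2)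
    (ρ : Measure ℝ) [IsFiniteMeasure ρ]
    (hlim : Tendsto (fun l : ℝ => (ρ (Set.Icc 0 l)).toReal / l ^ ζ)
      (nhdsWithin 0 (Set.Ioi 0)) (nhds 1)) :
    Tendsto (fun n : ℕ =>
        (2 * α * n) ^ ζ * ((1/2) * ∫ l in Set.Icc (0:ℝ) 1, (1 - α * l) ^ (2 * n) ∂ρ))
      atTop (nhds (Real.Gamma (ζ + 1) / 2)) := by
  set F : ℝ → ℝ := fun u => ρ.real (Icc 0 u)
  have hFmono : Monotone F := fun _ _ huv => measureReal_mono (Icc_subset_Icc_right huv)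
  have hFm : Measurable F := hFmono.measurable
  have hFM : ∀ u, |F u| ≤ ρ.real univ := fun u => by
    rw [abs_of_nonneg measureReal_nonneg]; exact measureReal_mono (subset_univ _)
  have hboundary := tendsto_rpow_mul_one_sub_pow_two_mul ζ (ρ.real (Icc 0 1)) hα0 hα2
  have hbulk := tendsto_integral_rescaledLossIntegrand hζ.le hα0 hα2 hFm hFM hlim
  have hsum := (hboundary.add hbulk).const_mul (1 / 2)
  rw [zero_add, one_mul, one_div_mul_eq_div] at hsum
  refine hsum.congr fun n => ?_
  rw [setIntegral_Icc_one_sub_mul_pow, integral_rescaledLossIntegrand hα0]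
  push_cast
  ring

/-- Gradient descent with constant learning rate `α ∈ (0,2)`: under the exact power-law
spectral asymptotic `ρ([0,λ]) ~ λ^ζ` as `λ → 0+`, the loss
`L_n = (1/2)∫ (1-αλ)^{2n} ρ(dλ)` satisfies `(2αn)^ζ L_n → Γ(ζ+1)/2`. -/
theorem gd_constant_rate_loss_asymptotic
    (ζ α : ℝ) (hζ : 0 < ζ) (hα0 : 0 < α) (hα2 : α < 2)
    (ρ : Measure ℝ) [IsFiniteMeasure ρ]
    (hsupp : ρ (Set.Icc (0:ℝ) 1)ᶜ = 0)
    (hlim : Tendsto (fun l : ℝ => (ρ (Set.Icc 0 l)).toReal / l ^ ζ)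
      (nhdsWithin 0 (Set.Ioi 0)) (nhds 1)) :
    Tendsto (fun n : ℕ =>
        (2 * α * n) ^ ζ * ((1/2) * ∫ l in Set.Icc (0:ℝ) 1, (1 - α * l) ^ (2 * n) ∂ρ))
      atTop (nhds (Real.Gamma (ζ + 1) / 2)) :=
  gd_constant_rate_loss_asymptotic_general ζ α hζ hα0 hα2 ρ hlim
end

section
/- Let ζ>0 and 0<α<2. Let ρ be a finite Borel measure on ℝ supported on [0,1] with ρ({0})=0 and ρ((0,λ]) ≤ λ^ζ for all λ ∈ [0,1]. Then for every n ≥ 1, (1/2)∫_{[0,1]} (1-αλ)^{2n} ρ(dλ) ≤ (1/2)·Γ(ζ+1)·(2nα)^{-ζ} + [if α>1 then (1/2)(α-1)^{2n} else 0]. -/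
/-!
For `αλ ≤ 1` we have `0 ≤ 1 - αλ ≤ exp (-αλ)`, so `(1 - αλ)^(2n) ≤ exp (-2nαλ)`; the case
`αλ > 1` can only occur for `α > 1`, and then `|1 - αλ| ≤ α - 1` on `[0, 1]`. The exponential
part is integrated against `ρ` by writing `exp (-tλ) = ∫_λ^∞ t exp (-tu) du` and swapping the
integrals (Tonelli), which gives `∫_0^∞ t exp (-tu) ρ([0, u)) du ≤ ∫_0^∞ t exp (-tu) u^ζ du
= Γ(ζ + 1) t^(-ζ)`.
-/

open MeasureTheory Set
open scoped ENNReal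

lemma one_sub_pow_le_exp_neg_mul {x : ℝ} (hx : x ≤ 1) (m : ℕ) :
    (1 - x) ^ m ≤ Real.exp (-(m * x)) :=
  calc (1 - x) ^ m ≤ Real.exp (-x) ^ m :=
        pow_le_pow_left₀ (by linarith) (Real.one_sub_le_exp_neg x) m
    _ = Real.exp (-(m * x)) := by rw [← Real.exp_nat_mul]; ring_nf

lemma one_sub_mul_pow_two_mul_le {α l : ℝ} (hl : l ∈ Icc (0 : ℝ) 1) (n : ℕ) :
    (1 - α * l) ^ (2 * n) ≤
      Real.exp (-(2 * n * α * l)) + if 1 < α then (α - 1) ^ (2 * n) else 0 := by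
  obtain ⟨hl0, hl1⟩ := hl
  by_cases h : α * l ≤ 1
  · have hC : 0 ≤ if 1 < α then (α - 1) ^ (2 * n) else 0 := by
      split_ifs <;> positivity
    have := one_sub_pow_le_exp_neg_mul h (2 * n)
    push_cast at this
    rw [show 2 * (n : ℝ) * α * l = 2 * n * (α * l) by ring]
    linarith
  · push Not at h
    have hα : 1 < α := by nlinarith
    rw [if_pos hα, show 1 - α * l = -(α * l - 1) by ring, (even_two_mul n).neg_pow]
    have : (α * l - 1) ^ (2 * n) ≤ (α - 1) ^ (2 * n) :=
      pow_le_pow_left₀ (by linarith) (by nlinarith) _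
    linarith [Real.exp_nonneg (-(2 * n * α * l))]

lemma ofReal_exp_neg_mul_eq_lintegral_Ioi {t : ℝ} (ht : 0 < t) (x : ℝ) :
    ENNReal.ofReal (Real.exp (-(t * x))) =
      ∫⁻ u in Ioi x, ENNReal.ofReal (t * Real.exp (-(t * u))) := by
  have hint : IntegrableOn (fun u ↦ t * Real.exp (-(t * u))) (Ioi x) := by
    have h := (exp_neg_integrableOn_Ioi x ht).const_mul t
    simp only [neg_mul] at h
    exact h
  rw [← ofReal_integral_eq_lintegral_ofReal hint (ae_of_all _ fun u ↦ by positivity),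
    integral_const_mul]
  have := integral_exp_mul_Ioi (neg_neg_of_pos ht) x
  simp only [neg_mul] at this
  rw [this]
  field_simp

lemma lintegral_mul_exp_neg_mul_mul_rpow_Ioi {ζ t : ℝ} (hζ : -1 < ζ) (ht : 0 < t) :
    ∫⁻ u in Ioi 0, ENNReal.ofReal (t * Real.exp (-(t * u)) * u ^ ζ) =
      ENNReal.ofReal (Real.Gamma (ζ + 1) * t ^ (-ζ)) := by
  have hint : IntegrableOn (fun u ↦ t * Real.exp (-(t * u)) * u ^ ζ) (Ioi 0) := by
    refine IntegrableOn.congr_fun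
      ((integrableOn_rpow_mul_exp_neg_mul_rpow hζ zero_lt_one ht).const_mul t) (fun u _ ↦ ?_)
      measurableSet_Ioi
    simp only [Real.rpow_one]
    ring_nf
  rw [← ofReal_integral_eq_lintegral_ofReal hint
    ((ae_restrict_iff' measurableSet_Ioi).2 (ae_of_all _ fun u (hu : 0 < u) ↦ by positivity))]
  congr 1
  have hΓ := Real.integral_rpow_mul_exp_neg_mul_Ioi (by linarith : 0 < ζ + 1) ht
  simp only [add_sub_cancel_right] at hΓ
  calc ∫ u in Ioi 0, t * Real.exp (-(t * u)) * u ^ ζ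
      = t * ∫ u in Ioi 0, u ^ ζ * Real.exp (-(t * u)) := by
        rw [← integral_const_mul]; congr 1; ext u; ring
    _ = Real.Gamma (ζ + 1) * t ^ (-ζ) := by
        rw [hΓ, Real.div_rpow zero_le_one ht.le, Real.one_rpow,
          show -ζ = 1 - (ζ + 1) by ring, Real.rpow_sub ht, Real.rpow_one]
        ring

lemma lintegral_setLIntegral_Ioi_eq {μ : Measure ℝ} [SFinite μ] {g : ℝ → ℝ≥0∞}
    (hg : Measurable g) :
    ∫⁻ x, (∫⁻ u in Ioi x, g u) ∂μ = ∫⁻ u, g u * μ (Iio u) := by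
  have hmeas : Measurable fun p : ℝ × ℝ ↦ (Ioi p.1).indicator g p.2 := by
    simp only [indicator, mem_Ioi]
    exact Measurable.ite (measurableSet_lt measurable_fst measurable_snd)
      (hg.comp measurable_snd) measurable_const
  calc ∫⁻ x, (∫⁻ u in Ioi x, g u) ∂μ = ∫⁻ x, (∫⁻ u, (Ioi x).indicator g u) ∂μ := by
        simp only [lintegral_indicator measurableSet_Ioi]
    -- both indicators unfold to `if x < u then g u else 0`
    _ = ∫⁻ u, ∫⁻ x, (Iio u).indicator (fun _ ↦ g u) x ∂μ :=
        lintegral_lintegral_swap hmeas.aemeasurable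
    _ = ∫⁻ u, g u * μ (Iio u) := by
        simp only [lintegral_indicator_const measurableSet_Iio]

theorem integral_exp_neg_mul_le_of_measure_Iio_le {μ : Measure ℝ} [SFinite μ] {ζ t : ℝ}
    (hζ : -1 < ζ) (ht : 0 < t) (hμ0 : μ (Iic 0) = 0)
    (hμ : ∀ u, 0 < u → μ (Iio u) ≤ ENNReal.ofReal (u ^ ζ)) :
    ∫ x, Real.exp (-(t * x)) ∂μ ≤ Real.Gamma (ζ + 1) * t ^ (-ζ) := by
  have hpt : ∀ u, ENNReal.ofReal (t * Real.exp (-(t * u))) * μ (Iio u) ≤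
      (Ioi 0).indicator (fun u ↦ ENNReal.ofReal (t * Real.exp (-(t * u)) * u ^ ζ)) u := by
    intro u
    by_cases hu : 0 < u
    · rw [indicator_of_mem (show u ∈ Ioi 0 from hu),
        ENNReal.ofReal_mul (by positivity : 0 ≤ t * Real.exp (-(t * u)))]
      gcongr
      exact hμ u hu
    · rw [measure_mono_null (Iio_subset_Iic_self.trans (Iic_subset_Iic.2 (not_lt.1 hu))) hμ0]
      simp
  have hlint : ∫⁻ x, ENNReal.ofReal (Real.exp (-(t * x))) ∂μ ≤
      ENNReal.ofReal (Real.Gamma (ζ + 1) * t ^ (-ζ)) :=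
    calc ∫⁻ x, ENNReal.ofReal (Real.exp (-(t * x))) ∂μ
        = ∫⁻ u, ENNReal.ofReal (t * Real.exp (-(t * u))) * μ (Iio u) := by
          simp only [ofReal_exp_neg_mul_eq_lintegral_Ioi ht]
          exact lintegral_setLIntegral_Ioi_eq (by fun_prop)
      _ ≤ ∫⁻ u in Ioi 0, ENNReal.ofReal (t * Real.exp (-(t * u)) * u ^ ζ) := by
          rw [← lintegral_indicator measurableSet_Ioi]
          exact lintegral_mono hpt
      _ = ENNReal.ofReal (Real.Gamma (ζ + 1) * t ^ (-ζ)) :=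
          lintegral_mul_exp_neg_mul_mul_rpow_Ioi hζ ht
  rw [integral_eq_lintegral_of_nonneg_ae (ae_of_all _ fun x ↦ (Real.exp_pos _).le)
    (by fun_prop)]
  exact ENNReal.toReal_le_of_le_ofReal
    (mul_nonneg (Real.Gamma_pos_of_pos (by linarith)).le (Real.rpow_nonneg ht.le _)) hlint

lemma restrict_Ioc_measure_Iio_le {ρ : Measure ℝ} [IsFiniteMeasure ρ] {ζ : ℝ} (hζ : 0 ≤ ζ)
    (hpow : ∀ l ∈ Icc (0 : ℝ) 1, (ρ (Ioc 0 l)).toReal ≤ l ^ ζ) {u : ℝ} (hu : 0 < u) :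
    ρ.restrict (Ioc 0 1) (Iio u) ≤ ENNReal.ofReal (u ^ ζ) := by
  have hm : min u 1 ∈ Icc (0 : ℝ) 1 := ⟨le_min hu.le zero_le_one, min_le_right _ _⟩
  calc ρ.restrict (Ioc 0 1) (Iio u) = ρ (Iio u ∩ Ioc 0 1) :=
        Measure.restrict_apply measurableSet_Iio
    _ ≤ ρ (Ioc 0 (min u 1)) := measure_mono fun x ⟨hxu, hx0, hx1⟩ ↦ ⟨hx0, le_min hxu.le hx1⟩
    _ ≤ ENNReal.ofReal (min u 1 ^ ζ) :=
        (ENNReal.le_ofReal_iff_toReal_le (measure_ne_top ρ _) (Real.rpow_nonneg hm.1 _)).2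
          (hpow _ hm)
    _ ≤ ENNReal.ofReal (u ^ ζ) :=
        ENNReal.ofReal_le_ofReal (Real.rpow_le_rpow hm.1 (min_le_left _ _) hζ)

theorem setIntegral_Ioc_one_sub_mul_pow_two_mul_le {ρ : Measure ℝ} [IsFiniteMeasure ρ]
    {ζ α : ℝ} (hζ : 0 ≤ ζ) (hα : 0 < α)
    (hpow : ∀ l ∈ Icc (0 : ℝ) 1, (ρ (Ioc 0 l)).toReal ≤ l ^ ζ) {n : ℕ} (hn : 1 ≤ n) :
    ∫ l in Ioc 0 1, (1 - α * l) ^ (2 * n) ∂ρ ≤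
      Real.Gamma (ζ + 1) * (2 * n * α) ^ (-ζ) + if 1 < α then (α - 1) ^ (2 * n) else 0 := by
  set C : ℝ := if 1 < α then (α - 1) ^ (2 * n) else 0
  have hC : 0 ≤ C := by simp only [C]; split_ifs <;> positivity
  have ht : 0 < 2 * (n : ℝ) * α := by
    have : (0 : ℝ) < n := by exact_mod_cast hn
    positivity
  have hmass : ρ.real (Ioc 0 1) ≤ 1 := by
    simpa [Measure.real] using hpow 1 ⟨zero_le_one, le_rfl⟩
  have hexp_int : IntegrableOn (fun l ↦ Real.exp (-(2 * n * α * l))) (Ioc 0 1) ρ :=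
    (by fun_prop : Continuous _).integrableOn_Ioc
  have hexp : ∫ l in Ioc 0 1, Real.exp (-(2 * n * α * l)) ∂ρ ≤
      Real.Gamma (ζ + 1) * (2 * n * α) ^ (-ζ) := by
    simpa only [mul_assoc] using integral_exp_neg_mul_le_of_measure_Iio_le (by linarith) ht
      (by simp [Measure.restrict_apply measurableSet_Iic, (Iic_disjoint_Ioc le_rfl).inter_eq])
      (fun u hu ↦ restrict_Ioc_measure_Iio_le hζ hpow hu)
  calc ∫ l in Ioc 0 1, (1 - α * l) ^ (2 * n) ∂ρ
      ≤ ∫ l in Ioc 0 1, (Real.exp (-(2 * n * α * l)) + C) ∂ρ :=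
        integral_mono_of_nonneg (ae_of_all _ fun l ↦ (even_two_mul n).pow_nonneg _)
          (hexp_int.add (integrable_const C))
          ((ae_restrict_iff' measurableSet_Ioc).2 (ae_of_all _ fun l hl ↦
            one_sub_mul_pow_two_mul_le (Ioc_subset_Icc_self hl) n))
    _ = ∫ l in Ioc 0 1, Real.exp (-(2 * n * α * l)) ∂ρ + ρ.real (Ioc 0 1) * C := by
        rw [integral_add hexp_int (integrable_const C), setIntegral_const, smul_eq_mul]
    _ ≤ Real.Gamma (ζ + 1) * (2 * n * α) ^ (-ζ) + C :=
        add_le_add hexp (mul_le_of_le_one_left hC hmass)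

theorem gd_constant_rate_loss_upper_bound_general
    (ζ α : ℝ) (hζ : 0 < ζ) (hα0 : 0 < α)
    (ρ : Measure ℝ) [IsFiniteMeasure ρ]
    (h0 : ρ {(0:ℝ)} = 0)
    (hpow : ∀ l ∈ Set.Icc (0:ℝ) 1, (ρ (Set.Ioc 0 l)).toReal ≤ l ^ ζ) :
    ∀ n : ℕ, 1 ≤ n →
      (1/2) * ∫ l in Set.Icc (0:ℝ) 1, (1 - α * l) ^ (2 * n) ∂ρ ≤
        (1/2) * Real.Gamma (ζ + 1) * (2 * n * α) ^ (-ζ) +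
          (if 1 < α then (1/2) * (α - 1) ^ (2 * n) else 0) := by
  intro n hn
  have key := setIntegral_Ioc_one_sub_mul_pow_two_mul_le hζ.le hα0 hpow hn
  rw [setIntegral_congr_set (Ioc_ae_eq_Icc' h0)] at key
  split_ifs at key ⊢ <;> linarith

/-- Gradient descent with constant learning rate `α ∈ (0,2)`: under the power-law
spectral condition `ρ((0,λ]) ≤ λ^ζ`, the loss at step `n ≥ 1` is bounded by
`(1/2)Γ(ζ+1)(2nα)^{-ζ}` plus, when `α > 1`, the extra term `(1/2)(α-1)^{2n}`. -/
theorem gd_constant_rate_loss_upper_bound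
    (ζ α : ℝ) (hζ : 0 < ζ) (hα0 : 0 < α) (hα2 : α < 2)
    (ρ : Measure ℝ) [IsFiniteMeasure ρ]
    (hsupp : ρ (Set.Icc (0:ℝ) 1)ᶜ = 0)
    (h0 : ρ {(0:ℝ)} = 0)
    (hpow : ∀ l ∈ Set.Icc (0:ℝ) 1, (ρ (Set.Ioc 0 l)).toReal ≤ l ^ ζ) :
    ∀ n : ℕ, 1 ≤ n →
      (1/2) * ∫ l in Set.Icc (0:ℝ) 1, (1 - α * l) ^ (2 * n) ∂ρ ≤
        (1/2) * Real.Gamma (ζ + 1) * (2 * n * α) ^ (-ζ) +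
          (if 1 < α then (1/2) * (α - 1) ^ (2 * n) else 0) :=
  gd_constant_rate_loss_upper_bound_general ζ α hζ hα0 ρ h0 hpow
end

section
/- Let α ∈ ℝ and β > 0. Define real polynomials q_n by q_0 = 1, q_1(λ) = 1-αλ, and q_{n+1}(λ) = (1-αλ)q_n(λ) + β(q_n(λ)-q_{n-1}(λ)) for n ≥ 1. Then for every n ≥ 0 and every λ ∈ ℝ, q_n(λ) = β^{(n+1)/2}·( U_n(z)/√β − U_{n+1}(z) + 2·T_{n+1}(z) ), where z = (1+β-αλ)/(2√β) and T_k, U_k denote the Chebyshev polynomials of the first and second kind evaluated at z. -/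
/-!
With `s = √β` and `z = (1 + β - αλ) / (2s)` the Heavy Ball recurrence reads
`q_{n+2} = 2sz q_{n+1} - s² q_n`, so `q_n / sⁿ` satisfies the Chebyshev recurrence in `z`.
Matching the two initial values gives `q_n = sⁿ (U_n(z) - s U_{n-1}(z))`, and the stated form
follows from `2 T_{n+1} - U_{n+1} = -U_{n-1}`.
-/

open Polynomial Polynomial.Chebyshev

theorem Polynomial.Chebyshev.two_mul_eval_T_sub_eval_U {R : Type*} [CommRing R] (n : ℤ) (x : R) :
    2 * (T R (n + 1)).eval x - (U R (n + 1)).eval x = -(U R (n - 1)).eval x := by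
  have h := congrArg (eval x) (two_mul_T_eq_U_sub_U R (n - 1))
  rw [show n - 1 + 2 = n + 1 by ring, eval_mul, eval_ofNat, eval_sub] at h
  rw [h]
  ring

theorem eq_of_two_step_recurrence {R : Type*} [Semiring R] {a b : R} {f g : ℕ → R}
    (hf : ∀ n, f (n + 2) = a * f (n + 1) + b * f n)
    (hg : ∀ n, g (n + 2) = a * g (n + 1) + b * g n)
    (h0 : f 0 = g 0) (h1 : f 1 = g 1) : f = g := by
  funext n
  induction n using Nat.twoStepInduction with
  | zero => exact h0
  | one => exact h1
  | more n ih0 ih1 => rw [hf, hg, ih0, ih1]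

section ScaledChebyshev

variable {R : Type*} [CommRing R] (s z : R)

noncomputable def scaledChebyshevResidual (n : ℕ) : R :=
  s ^ n * ((U R n).eval z - s * (U R ((n : ℤ) - 1)).eval z)

theorem scaledChebyshevResidual_zero : scaledChebyshevResidual s z 0 = 1 := by
  simp [scaledChebyshevResidual]

theorem scaledChebyshevResidual_one :
    scaledChebyshevResidual s z 1 = 2 * s * z - s ^ 2 := by
  simp only [scaledChebyshevResidual, Nat.cast_one, sub_self, U_one, U_zero, eval_mul,
    eval_ofNat, eval_X, eval_one]
  ring

theorem scaledChebyshevResidual_add_two (n : ℕ) :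
    scaledChebyshevResidual s z (n + 2) =
      2 * s * z * scaledChebyshevResidual s z (n + 1) + -s ^ 2 * scaledChebyshevResidual s z n := by
  simp only [scaledChebyshevResidual]
  push_cast
  rw [show (n : ℤ) + 2 - 1 = n + 1 by ring, show (n : ℤ) + 1 - 1 = n by ring, U_add_two,
    U_add_one]
  simp only [eval_sub, eval_mul, eval_ofNat, eval_X]
  ring

end ScaledChebyshev

/-- The residual polynomials of constant-rate Heavy Ball are given explicitly in terms of
Chebyshev polynomials of the first and second kind:
`q_n(λ) = β^{(n+1)/2} ( U_n(z)/√β − U_{n+1}(z) + 2 T_{n+1}(z) )` with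
`z = (1+β-αλ)/(2√β)`. -/
theorem hb_residual_polynomial_chebyshev
    (α β : ℝ) (hβ : 0 < β)
    (q : ℕ → ℝ → ℝ)
    (hq0 : ∀ l, q 0 l = 1)
    (hq1 : ∀ l, q 1 l = 1 - α * l)
    (hqrec : ∀ n : ℕ, 1 ≤ n → ∀ l,
      q (n + 1) l = (1 - α * l) * q n l + β * (q n l - q (n - 1) l)) :
    ∀ (n : ℕ) (l : ℝ),
      q n l = β ^ (((n : ℝ) + 1) / 2) *
        ((Polynomial.Chebyshev.U ℝ (n : ℤ)).eval ((1 + β - α * l) / (2 * Real.sqrt β))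
            / Real.sqrt β
          - (Polynomial.Chebyshev.U ℝ ((n : ℤ) + 1)).eval ((1 + β - α * l) / (2 * Real.sqrt β))
          + 2 * (Polynomial.Chebyshev.T ℝ ((n : ℤ) + 1)).eval
              ((1 + β - α * l) / (2 * Real.sqrt β))) := by
  intro n l
  set s := Real.sqrt β
  set z := (1 + β - α * l) / (2 * s)
  have hs : s ≠ 0 := (Real.sqrt_pos.2 hβ).ne'
  have hs2 : s ^ 2 = β := Real.sq_sqrt hβ.le
  have h2sz : 2 * s * z = 1 + β - α * l := by simp only [z]; field_simp
  have hq : (q · l) = scaledChebyshevResidual s z := by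
    refine eq_of_two_step_recurrence (fun n => ?_) (scaledChebyshevResidual_add_two s z)
      (by simp [hq0, scaledChebyshevResidual_zero])
      (by simp only [hq1, scaledChebyshevResidual_one, h2sz, hs2]; ring)
    simp only [hqrec (n + 1) n.succ_pos, Nat.add_sub_cancel, h2sz, hs2]
    ring
  have hTU := two_mul_eval_T_sub_eval_U (n : ℤ) z
  rw [congrFun hq n, Real.rpow_div_two_eq_sqrt _ hβ.le, ← Nat.cast_add_one, Real.rpow_natCast,
    scaledChebyshevResidual]
  field_simp
  linear_combination -s ^ (n + 2) * hTU
end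

section
/- Let ζ>0 and let ρ be the measure on [0,1] with density ζλ^{ζ-1} with respect to Lebesgue measure (so ρ((0,λ]) = λ^ζ). Then for every n ∈ ℕ, the infimum over all real polynomials q with deg q ≤ n and q(0)=1 of (1/2)∫_0^1 q(λ)² ζλ^{ζ-1} dλ equals Γ(ζ+1)²·(n!)² / (2·Γ(ζ+n+1)²). -/
/-!
Write `(a)ₙ = a (a + 1) ⋯ (a + n - 1)`. The minimiser is the shifted Jacobi polynomial
`q⋆(λ) = ∑ₖ (-1)ᵏ C(n,k) (ζ + k + 1)ₙ / (ζ + 1)ₙ λᵏ`. As `∫ λᵐ dρ = ζ / (ζ + m)`, its moments are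
`∫ q⋆ λʲ dρ = ζ / (ζ + 1)ₙ · ∑ₖ (-1)ᵏ C(n,k) P(k) / (ζ + j + k)` with `P(y) = (ζ + y + 1)ₙ`, and the
partial-fraction identity `∑ₖ (-1)ᵏ C(n,k) P(k) / (x + k) = n! P(-x) / (x)ₙ₊₁` for `deg P ≤ n`
(the `n`-th forward difference of such a `P` is `n!` times its `n`-th coefficient) evaluates them:
for `1 ≤ j ≤ n` they vanish since `P(-ζ - j) = (1 - j)ₙ = 0`, and for `j = 0` the value is
`(n! / (ζ + 1)ₙ)²`. So `q⋆` is orthogonal to every `r` with `deg r ≤ n`, `r(0) = 0`, whence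
`∫ q² dρ = ∫ q⋆² dρ + ∫ (q - q⋆)² dρ` for every residual polynomial `q`, and `∫ q⋆² dρ = ∫ q⋆ dρ`.
Finally `Γ(ζ + n + 1) = Γ(ζ + 1) (ζ + 1)ₙ`.
-/

open MeasureTheory Set Polynomial

section AlternatingSums

open Finset fwdDiff

variable {R : Type*} [CommRing R]

theorem sum_range_neg_one_pow_mul_choose_mul_eval {n : ℕ} {P : R[X]} (hP : P.natDegree ≤ n) :
    ∑ k ∈ range (n + 1), (-1) ^ k * (n.choose k : R) * P.eval (k : R) =
      (-1) ^ n * n.factorial * P.coeff n := by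
  have hΔ : (Δ_[1])^[n] P.eval 0 = P.coeff n * n.factorial := by
    rcases hP.lt_or_eq with hlt | rfl
    · simp [Polynomial.fwdDiff_iter_eq_zero_of_degree_lt hlt, coeff_eq_zero_of_natDegree_lt hlt]
    · rw [Polynomial.fwdDiff_iter_degree_eq_factorial, Pi.smul_apply, coeff_natDegree,
        smul_eq_mul]
      rfl
  rw [fwdDiff_iter_eq_sum_shift] at hΔ
  rw [mul_assoc, ← mul_comm (P.coeff n), ← hΔ, mul_sum]
  refine sum_congr rfl fun k hk => ?_
  have hsign : (-1 : R) ^ n * (-1) ^ (n - k) = (-1) ^ k := by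
    rw [← pow_add, show n + (n - k) = k + 2 * (n - k) by grind, pow_add, pow_mul]
    simp
  simp only [← hsign, nsmul_eq_mul, mul_one, zero_add, zsmul_eq_mul, Int.cast_mul, Int.cast_pow,
    Int.cast_neg, Int.cast_one, Int.cast_natCast]
  ring

theorem exists_natDegree_le_mul_eval_eq_descPochhammer [IsDomain R] {n : ℕ} {P : R[X]}
    (hP : P.natDegree ≤ n) (x : R) :
    ∃ G : R[X], G.natDegree ≤ n ∧ G.coeff n = -P.eval (-x) ∧ ∀ y : R,
      (y + x) * G.eval y = (descPochhammer R (n + 1)).eval (-x) * P.eval y -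
        P.eval (-x) * (descPochhammer R (n + 1)).eval y := by
  set D := descPochhammer R (n + 1)
  set N := C (D.eval (-x)) * P - C (P.eval (-x)) * D
  have hroot : N.IsRoot (-x) := by simp [N, mul_comm]
  have hG : (X - C (-x)) * (N /ₘ (X - C (-x))) = N := mul_divByMonic_eq_iff_isRoot.mpr hroot
  have hNdeg : N.natDegree ≤ n + 1 :=
    (natDegree_sub_le _ _).trans <| max_le (natDegree_C_mul_le _ _ |>.trans (hP.trans n.le_succ))
      (natDegree_C_mul_le _ _ |>.trans (descPochhammer_natDegree _ _).le)
  have hGdeg : (N /ₘ (X - C (-x))).natDegree ≤ n := by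
    rw [natDegree_divByMonic _ (monic_X_sub_C _), natDegree_X_sub_C]
    omega
  refine ⟨N /ₘ (X - C (-x)), hGdeg, ?_, fun y => ?_⟩
  · have h := congrArg (coeff · (n + 1)) hG
    have hlead : D.coeff (n + 1) = 1 := by
      rw [← descPochhammer_natDegree R (n + 1), coeff_natDegree,
        (monic_descPochhammer R (n + 1)).leadingCoeff]
    simp only [coeff_X_sub_C_mul, coeff_eq_zero_of_natDegree_lt (Nat.lt_succ_of_le hGdeg),
      N, coeff_sub, coeff_C_mul, coeff_eq_zero_of_natDegree_lt (Nat.lt_succ_of_le hP),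
      hlead] at h
    linear_combination h
  · have h := congrArg (eval y) hG
    simp only [eval_mul, eval_sub, eval_X, eval_C, N] at h
    linear_combination h

variable {K : Type*} [Field K]

theorem sum_range_neg_one_pow_mul_choose_mul_eval_div {n : ℕ} {P : K[X]} (hP : P.natDegree ≤ n)
    {x : K} (hx : (ascPochhammer K (n + 1)).eval x ≠ 0) :
    ∑ k ∈ range (n + 1), (-1) ^ k * (n.choose k : K) * P.eval (k : K) / (x + k) =
      n.factorial * P.eval (-x) / (ascPochhammer K (n + 1)).eval x := by
  obtain ⟨G, hGdeg, hGcoeff, hG⟩ := exists_natDegree_le_mul_eval_eq_descPochhammer hP x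
  have hDx : (descPochhammer K (n + 1)).eval (-x) =
      (-1) ^ (n + 1) * (ascPochhammer K (n + 1)).eval x := by
    rw [← neg_neg x, ascPochhammer_eval_neg_eq_descPochhammer, neg_neg, ← mul_assoc, ← mul_pow]
    simp
  have hDx0 : (descPochhammer K (n + 1)).eval (-x) ≠ 0 := by simp [hDx, hx]
  have hterm : ∀ k ∈ range (n + 1), (-1) ^ k * (n.choose k : K) * P.eval (k : K) / (x + k) =
      (-1) ^ k * (n.choose k : K) * G.eval (k : K) / (descPochhammer K (n + 1)).eval (-x) := by
    intro k hk
    have hxk : x + k ≠ 0 := fun h => hx <| (ascPochhammer_eval_eq_zero_iff _ _).mpr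
      ⟨k, mem_range.mp hk, by linear_combination h⟩
    have h := hG k
    rw [descPochhammer_eval_coe_nat_of_lt (mem_range.mp hk), mul_zero, sub_zero] at h
    rw [div_eq_div_iff hxk hDx0]
    linear_combination -((-1) ^ k * (n.choose k : K)) * h
  rw [sum_congr rfl hterm, ← sum_div, sum_range_neg_one_pow_mul_choose_mul_eval hGdeg, hGcoeff,
    hDx, pow_succ]
  field_simp

end AlternatingSums

section LeastSquares

variable {μ : Measure ℝ} {w : ℝ → ℝ}

theorem integral_eval_add_mul (hint : ∀ p : ℝ[X], Integrable (fun x => p.eval x * w x) μ)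
    (p q : ℝ[X]) :
    ∫ x, (p + q).eval x * w x ∂μ = ∫ x, p.eval x * w x ∂μ + ∫ x, q.eval x * w x ∂μ := by
  simp only [eval_add, add_mul]
  exact integral_add (hint p) (hint q)

theorem integral_eval_mul_eq_zero_of_forall_pow
    (hint : ∀ p : ℝ[X], Integrable (fun x => p.eval x * w x) μ) {n : ℕ} {q₀ r : ℝ[X]}
    (horth : ∀ j, 1 ≤ j → j ≤ n → ∫ x, q₀.eval x * x ^ j * w x ∂μ = 0)
    (hr : r.natDegree ≤ n) (hr0 : r.eval 0 = 0) :
    ∫ x, (q₀ * r).eval x * w x ∂μ = 0 := by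
  have hsum : (fun x => (q₀ * r).eval x * w x) =
      fun x => ∑ j ∈ Finset.range (n + 1), r.coeff j * (q₀.eval x * x ^ j * w x) := by
    funext x
    rw [eval_mul, eval_eq_sum_range' (Nat.lt_succ_of_le hr), Finset.mul_sum, Finset.sum_mul]
    exact Finset.sum_congr rfl fun j _ => by ring
  rw [hsum, integral_finsetSum]
  · refine Finset.sum_eq_zero fun j hj => ?_
    rw [integral_const_mul]
    rcases Nat.eq_zero_or_pos j with rfl | hj1
    · rw [coeff_zero_eq_eval_zero, hr0, zero_mul]
    · rw [horth j hj1 (Nat.lt_succ_iff.mp (Finset.mem_range.mp hj)), mul_zero]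
  · intro j _
    exact (hint (C (r.coeff j) * q₀ * X ^ j)).congr (ae_of_all _ fun x => by
      simp only [eval_mul, eval_C, eval_pow, eval_X]; ring)

variable {n : ℕ} {q₀ : ℝ[X]}

theorem integral_eval_sq_mul_le_of_orthogonal (hw : 0 ≤ᵐ[μ] w)
    (hint : ∀ p : ℝ[X], Integrable (fun x => p.eval x * w x) μ)
    (horth : ∀ r : ℝ[X], r.natDegree ≤ n → r.eval 0 = 0 → ∫ x, (q₀ * r).eval x * w x ∂μ = 0)
    (hq₀ : q₀.natDegree ≤ n) (hq₀0 : q₀.eval 0 = 1) {q : ℝ[X]} (hq : q.natDegree ≤ n)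
    (hq0 : q.eval 0 = 1) :
    ∫ x, q₀.eval x ^ 2 * w x ∂μ ≤ ∫ x, q.eval x ^ 2 * w x ∂μ := by
  set r := q - q₀
  have hr : (C 2 * r).natDegree ≤ n :=
    (natDegree_C_mul_le _ _).trans <| (natDegree_sub_le _ _).trans (max_le hq hq₀)
  have hr0 : (C 2 * r).eval 0 = 0 := by simp [r, hq0, hq₀0]
  have hsq : ∀ p : ℝ[X], ∫ x, p.eval x ^ 2 * w x ∂μ = ∫ x, (p ^ 2).eval x * w x ∂μ := by
    simp [eval_pow]
  calc ∫ x, q₀.eval x ^ 2 * w x ∂μ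
      ≤ ∫ x, q₀.eval x ^ 2 * w x ∂μ + ∫ x, (q₀ * (C 2 * r)).eval x * w x ∂μ +
          ∫ x, r.eval x ^ 2 * w x ∂μ := by
        rw [horth _ hr hr0, add_zero, le_add_iff_nonneg_right]
        exact integral_nonneg_of_ae <| hw.mono fun x hx => mul_nonneg (sq_nonneg _) hx
    _ = ∫ x, q.eval x ^ 2 * w x ∂μ := by
        rw [hsq, hsq, hsq, ← integral_eval_add_mul hint, ← integral_eval_add_mul hint]
        congr 1 with x
        simp only [r, eval_add, eval_mul, eval_pow, eval_sub, eval_C]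
        ring

theorem integral_eval_sq_mul_eq_of_orthogonal
    (hint : ∀ p : ℝ[X], Integrable (fun x => p.eval x * w x) μ)
    (horth : ∀ r : ℝ[X], r.natDegree ≤ n → r.eval 0 = 0 → ∫ x, (q₀ * r).eval x * w x ∂μ = 0)
    (hq₀ : q₀.natDegree ≤ n) (hq₀0 : q₀.eval 0 = 1) :
    ∫ x, q₀.eval x ^ 2 * w x ∂μ = ∫ x, q₀.eval x * w x ∂μ := by
  have hr : (q₀ - 1).natDegree ≤ n :=
    (natDegree_sub_le _ _).trans (max_le hq₀ (by simp))
  calc ∫ x, q₀.eval x ^ 2 * w x ∂μ = ∫ x, (q₀ * (q₀ - 1) + q₀).eval x * w x ∂μ := by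
        congr 1 with x
        simp only [eval_add, eval_mul, eval_sub, eval_one]
        ring
    _ = ∫ x, q₀.eval x * w x ∂μ := by
        rw [integral_eval_add_mul hint, horth _ hr (by simp [hq₀0]), zero_add]

end LeastSquares

section PowerLaw

variable {ζ : ℝ}

theorem pow_mul_rpow_eqOn (ζ : ℝ) (m : ℕ) :
    EqOn (fun l : ℝ => l ^ m * (ζ * l ^ (ζ - 1))) (fun l => ζ * l ^ (ζ + m - 1)) (Ioc 0 1) :=
  fun l hl => by
    dsimp only
    rw [show ζ + m - 1 = m + (ζ - 1) by ring, Real.rpow_add hl.1, Real.rpow_natCast]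
    ring

theorem integrableOn_pow_mul_rpow (hζ : 0 < ζ) (m : ℕ) :
    IntegrableOn (fun l : ℝ => l ^ m * (ζ * l ^ (ζ - 1))) (Ioc 0 1) := by
  have hexp : -1 < ζ + m - 1 := by linarith [(Nat.cast_nonneg m : (0 : ℝ) ≤ m)]
  have h := (intervalIntegral.intervalIntegrable_rpow' hexp (a := 0) (b := 1)).const_mul ζ
  rw [intervalIntegrable_iff_integrableOn_Ioc_of_le zero_le_one] at h
  exact h.congr_fun (pow_mul_rpow_eqOn ζ m).symm measurableSet_Ioc

theorem integral_pow_mul_rpow (hζ : 0 < ζ) (m : ℕ) :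
    ∫ l in Ioc 0 1, l ^ m * (ζ * l ^ (ζ - 1)) = ζ / (ζ + m) := by
  have hexp : -1 < ζ + m - 1 := by linarith [(Nat.cast_nonneg m : (0 : ℝ) ≤ m)]
  rw [setIntegral_congr_fun measurableSet_Ioc (pow_mul_rpow_eqOn ζ m), integral_const_mul,
    ← intervalIntegral.integral_of_le zero_le_one, integral_rpow (Or.inl hexp),
    Real.one_rpow, Real.zero_rpow (by linarith), sub_add_cancel]
  ring

theorem integrableOn_eval_mul_rpow (hζ : 0 < ζ) (p : ℝ[X]) :
    IntegrableOn (fun l => p.eval l * (ζ * l ^ (ζ - 1))) (Ioc 0 1) := by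
  simp_rw [eval_eq_sum_range, Finset.sum_mul, mul_assoc]
  exact integrable_finsetSum _ fun k _ => (integrableOn_pow_mul_rpow hζ k).const_mul _

end PowerLaw

section JacobiResidual

open Finset

variable {ζ : ℝ} {n : ℕ}

noncomputable def jacobiResidual (ζ : ℝ) (n : ℕ) : ℝ[X] :=
  ∑ k ∈ range (n + 1), C ((-1) ^ k * n.choose k * (ascPochhammer ℝ n).eval (ζ + 1 + k) /
    (ascPochhammer ℝ n).eval (ζ + 1)) * X ^ k

theorem natDegree_jacobiResidual_le : (jacobiResidual ζ n).natDegree ≤ n :=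
  natDegree_sum_le_of_forall_le _ _ fun k hk =>
    (natDegree_C_mul_X_pow_le _ k).trans (Nat.lt_succ_iff.mp (mem_range.mp hk))

theorem jacobiResidual_eval_zero (hζ : 0 < ζ) : (jacobiResidual ζ n).eval 0 = 1 := by
  rw [jacobiResidual, eval_finsetSum, sum_eq_single_of_mem 0 (mem_range.mpr n.succ_pos)]
  · have := (ascPochhammer_pos n (ζ + 1) (by linarith)).ne'
    simp [this]
  · intro k _ hk
    simp [hk]

theorem integral_jacobiResidual_mul_pow (hζ : 0 < ζ) (j : ℕ) :
    ∫ l in Ioc 0 1, (jacobiResidual ζ n).eval l * l ^ j * (ζ * l ^ (ζ - 1)) =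
      ζ * n.factorial * (ascPochhammer ℝ n).eval (1 - j : ℝ) /
        ((ascPochhammer ℝ n).eval (ζ + 1) * (ascPochhammer ℝ (n + 1)).eval (ζ + j)) := by
  set c : ℕ → ℝ := fun k => (-1) ^ k * n.choose k * (ascPochhammer ℝ n).eval (ζ + 1 + k) /
    (ascPochhammer ℝ n).eval (ζ + 1)
  have hexpand : (fun l : ℝ => (jacobiResidual ζ n).eval l * l ^ j * (ζ * l ^ (ζ - 1))) =
      fun l => ∑ k ∈ range (n + 1), c k * (l ^ (k + j) * (ζ * l ^ (ζ - 1))) := by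
    funext l
    simp only [jacobiResidual, eval_finsetSum, eval_mul, eval_C, eval_pow, eval_X, sum_mul]
    exact sum_congr rfl fun k _ => by ring
  set P := (ascPochhammer ℝ n).comp (X + C (ζ + 1))
  have hP : P.natDegree ≤ n := by
    rw [natDegree_comp, ascPochhammer_natDegree, natDegree_X_add_C, mul_one]
  have hpos := (ascPochhammer_pos n (ζ + 1) (by linarith)).ne'
  rw [hexpand, integral_finsetSum _ fun k _ => (integrableOn_pow_mul_rpow hζ _).const_mul _]
  simp_rw [integral_const_mul, integral_pow_mul_rpow hζ]
  have hsum := sum_range_neg_one_pow_mul_choose_mul_eval_div hP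
    (ascPochhammer_pos (n + 1) (ζ + j) (by positivity)).ne'
  simp only [P, eval_comp, eval_add, eval_X, eval_C] at hsum
  rw [show (1 : ℝ) - j = -(ζ + j) + (ζ + 1) by ring, mul_assoc, mul_div_assoc,
    div_mul_eq_div_div_swap, ← hsum, sum_div, mul_sum]
  refine sum_congr rfl fun k _ => ?_
  have hk : ζ + j + k ≠ 0 := by positivity
  simp only [c]
  push_cast
  field_simp
  rw [add_comm (k : ℝ) (ζ + 1)]
  ring

theorem integral_jacobiResidual_mul_pow_eq_zero (hζ : 0 < ζ) {j : ℕ} (hj1 : 1 ≤ j) (hjn : j ≤ n) :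
    ∫ l in Ioc 0 1, (jacobiResidual ζ n).eval l * l ^ j * (ζ * l ^ (ζ - 1)) = 0 := by
  rw [integral_jacobiResidual_mul_pow hζ,
    show (1 - j : ℝ) = -((j - 1 : ℕ) : ℝ) by push_cast [Nat.cast_sub hj1]; ring,
    ascPochhammer_eval_neg_coe_nat_of_lt (by omega), mul_zero, zero_div]

theorem integral_jacobiResidual_mul (hζ : 0 < ζ) :
    ∫ l in Ioc 0 1, (jacobiResidual ζ n).eval l * (ζ * l ^ (ζ - 1)) =
      (n.factorial / (ascPochhammer ℝ n).eval (ζ + 1)) ^ 2 := by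
  have h := integral_jacobiResidual_mul_pow (n := n) hζ 0
  simp only [pow_zero, mul_one, Nat.cast_zero, sub_zero, add_zero, ascPochhammer_eval_one,
    ascPochhammer_succ_left, eval_mul, eval_X, eval_comp, eval_add, eval_one] at h
  have hpos := (ascPochhammer_pos n (ζ + 1) (by linarith)).ne'
  rw [h]
  field_simp

end JacobiResidual

theorem Real.Gamma_add_nat_eq_mul_ascPochhammer {x : ℝ} (hx : ∀ k : ℕ, x + k ≠ 0) (n : ℕ) :
    Real.Gamma (x + n) = Real.Gamma x * (ascPochhammer ℝ n).eval x := by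
  induction n with
  | zero => simp
  | succ n ih =>
    rw [Nat.cast_succ, ← add_assoc, Real.Gamma_add_one (hx n), ih, ascPochhammer_succ_eval]
    ring

/-- Conjugate Gradients on the exact power-law spectral measure `ρ(dλ) = ζλ^{ζ-1}dλ` on
`[0,1]`: the `n`-step CG loss, i.e. the infimum of `(1/2)∫₀¹ q(λ)² ζλ^{ζ-1} dλ` over residual
polynomials `q` of degree at most `n` with `q(0)=1`, equals `Γ(ζ+1)²(n!)²/(2Γ(ζ+n+1)²)`. -/
theorem cg_exact_power_law_loss
    (ζ : ℝ) (hζ : 0 < ζ) (n : ℕ) :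
    sInf {L : ℝ | ∃ q : Polynomial ℝ, q.natDegree ≤ n ∧ q.eval 0 = 1 ∧
        L = (1/2) * ∫ l in Set.Ioc (0:ℝ) 1, (q.eval l) ^ 2 * (ζ * l ^ (ζ - 1))} =
      Real.Gamma (ζ + 1) ^ 2 * (n.factorial : ℝ) ^ 2 /
        (2 * Real.Gamma (ζ + n + 1) ^ 2) := by
  have hint := integrableOn_eval_mul_rpow hζ
  have hw : 0 ≤ᵐ[volume.restrict (Ioc 0 1)] fun l : ℝ => ζ * l ^ (ζ - 1) :=
    (ae_restrict_iff' measurableSet_Ioc).mpr <| ae_of_all _ fun l hl =>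
      mul_nonneg hζ.le (Real.rpow_nonneg hl.1.le _)
  have horth : ∀ r : ℝ[X], r.natDegree ≤ n → r.eval 0 = 0 →
      ∫ l in Ioc 0 1, (jacobiResidual ζ n * r).eval l * (ζ * l ^ (ζ - 1)) = 0 :=
    fun r => integral_eval_mul_eq_zero_of_forall_pow hint
      fun j hj1 hjn => integral_jacobiResidual_mul_pow_eq_zero hζ hj1 hjn
  refine Eq.trans (IsLeast.csInf_eq ⟨⟨jacobiResidual ζ n, natDegree_jacobiResidual_le,
    jacobiResidual_eval_zero hζ, rfl⟩, ?_⟩) ?_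
  · rintro L ⟨q, hq, hq0, rfl⟩
    exact mul_le_mul_of_nonneg_left (integral_eval_sq_mul_le_of_orthogonal hw hint horth
      natDegree_jacobiResidual_le (jacobiResidual_eval_zero hζ) hq hq0) one_half_pos.le
  rw [integral_eval_sq_mul_eq_of_orthogonal hint horth natDegree_jacobiResidual_le
    (jacobiResidual_eval_zero hζ), integral_jacobiResidual_mul hζ, add_right_comm,
    Real.Gamma_add_nat_eq_mul_ascPochhammer (fun k => by positivity)]
  have hΓ := (Real.Gamma_pos_of_pos (by linarith : 0 < ζ + 1)).ne'
  have hpos := (ascPochhammer_pos n (ζ + 1) (by linarith)).ne'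
  field_simp
end

section
/- Let ζ>0 and let ρ be a finite Borel measure on ℝ supported on [0,1] with ρ({0})=0 and ρ((0,λ]) ≤ λ^ζ for all λ ∈ [0,1]. Then there exists a constant C, depending only on ζ, such that for all n ≥ 2, the infimum over all real polynomials q with deg q ≤ n and q(0)=1 of (1/2)∫_{[0,1]} q(λ)² ρ(dλ) is at most C·n^{-2ζ}·(log n)^{2ζ}. -/
/-!
Transport the Chebyshev polynomial `T_n` by the affine map sending `[a, 1]` onto `[-1, 1]`, where
`a = (cosh t - 1) / (cosh t + 1) = tanh (t / 2) ^ 2`; this map sends `0` to `cosh t`, so dividing by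
`T_n (cosh t) = cosh (n t)` gives a residual polynomial. It is bounded by `1` on `[0, a]`, a set of
`ρ`-mass at most `a ^ ζ ≤ t ^ (2ζ)`, and by `1 / cosh (n t)` on `[a, 1]`. For `t = 2ζ log n / n`
these are `(2ζ log n / n) ^ (2ζ)` and `1 / cosh (2ζ log n) ≤ 2 n ^ (-2ζ)`.
-/

open MeasureTheory Set Polynomial Real

namespace Polynomial.Chebyshev

theorem abs_eval_T_real_le_cosh_mul (n : ℤ) {x t : ℝ} (hx₁ : 1 ≤ x) (hxt : x ≤ cosh t) :
    |(T ℝ n).eval x| ≤ cosh (n * t) := by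
  rw [← cosh_arcosh hx₁, T_real_cosh, abs_of_pos (cosh_pos _), cosh_le_cosh, abs_mul, abs_mul]
  refine mul_le_mul_of_nonneg_left ?_ (abs_nonneg _)
  rwa [← cosh_le_cosh, cosh_arcosh hx₁]

end Polynomial.Chebyshev

noncomputable def chebyshevEdge (t : ℝ) : ℝ := (cosh t - 1) / (cosh t + 1)

lemma chebyshevEdge_nonneg (t : ℝ) : 0 ≤ chebyshevEdge t :=
  div_nonneg (by linarith [one_le_cosh t]) (by positivity)

lemma chebyshevEdge_le_one (t : ℝ) : chebyshevEdge t ≤ 1 :=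
  (div_le_one (by positivity)).2 (by linarith)

lemma cosh_sub_mul_chebyshevEdge (t : ℝ) : cosh t - (cosh t + 1) * chebyshevEdge t = 1 := by
  rw [chebyshevEdge, mul_div_cancel₀ _ (by positivity : cosh t + 1 ≠ 0)]
  ring

lemma chebyshevEdge_eq_sq (t : ℝ) : chebyshevEdge t = ((exp t - 1) / (exp t + 1)) ^ 2 := by
  have := exp_pos t
  rw [chebyshevEdge, cosh_eq, exp_neg]
  field_simp
  ring

lemma chebyshevEdge_le_sq {t : ℝ} (ht : 0 ≤ t) : chebyshevEdge t ≤ t ^ 2 := by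
  have hE := one_le_exp ht
  have hexp : exp t - 1 ≤ t * exp t := by
    have := mul_le_mul_of_nonneg_right (one_sub_le_exp_neg t) (exp_pos t).le
    rw [← exp_add, neg_add_cancel, exp_zero, sub_mul, one_mul] at this
    linarith
  rw [chebyshevEdge_eq_sq]
  refine pow_le_pow_left₀ (div_nonneg (by linarith) (by linarith)) ?_ 2
  rw [div_le_iff₀ (by linarith)]
  nlinarith

lemma chebyshevEdge_rpow_le {t ζ : ℝ} (ht : 0 ≤ t) (hζ : 0 ≤ ζ) :
    chebyshevEdge t ^ ζ ≤ t ^ (2 * ζ) := by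
  rw [rpow_mul ht]
  norm_cast
  exact rpow_le_rpow (chebyshevEdge_nonneg t) (chebyshevEdge_le_sq ht) hζ

/-- The map `l ↦ cosh t - (cosh t + 1) l` sends `[chebyshevEdge t, 1]` onto `[-1, 1]` and `0` to
`cosh t`, where `T_n` takes the value `cosh (n t)`. -/
noncomputable def chebyshevResidual (n : ℕ) (t : ℝ) : ℝ[X] :=
  C (cosh (n * t))⁻¹ * (Chebyshev.T ℝ n).comp (C (cosh t) - C (cosh t + 1) * X)

lemma eval_chebyshevResidual (n : ℕ) (t l : ℝ) :
    (chebyshevResidual n t).eval l =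
      (cosh (n * t))⁻¹ * (Chebyshev.T ℝ n).eval (cosh t - (cosh t + 1) * l) := by
  simp [chebyshevResidual]

lemma natDegree_chebyshevResidual_le (n : ℕ) (t : ℝ) :
    (chebyshevResidual n t).natDegree ≤ n := by
  unfold chebyshevResidual
  refine (natDegree_C_mul_le _ _).trans (natDegree_comp_le.trans ?_)
  have h : (C (cosh t) - C (cosh t + 1) * X : ℝ[X]).natDegree ≤ 1 := by compute_degree
  simpa [Chebyshev.natDegree_T] using Nat.mul_le_mul_left n h

lemma eval_zero_chebyshevResidual (n : ℕ) (t : ℝ) : (chebyshevResidual n t).eval 0 = 1 := by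
  rw [eval_chebyshevResidual, mul_zero, sub_zero, Chebyshev.T_real_cosh]
  push_cast
  exact inv_mul_cancel₀ (cosh_pos _).ne'

lemma abs_eval_chebyshevResidual_le_one {n : ℕ} {t l : ℝ}
    (hl : l ∈ Icc 0 (chebyshevEdge t)) : |(chebyshevResidual n t).eval l| ≤ 1 := by
  have := cosh_sub_mul_chebyshevEdge t
  have h := Chebyshev.abs_eval_T_real_le_cosh_mul n (x := cosh t - (cosh t + 1) * l) (t := t)
    (by nlinarith [hl.2, one_le_cosh t]) (by nlinarith [hl.1, one_le_cosh t])
  rw [eval_chebyshevResidual, abs_mul, abs_inv, abs_of_pos (cosh_pos _),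
    inv_mul_le_iff₀ (cosh_pos _), mul_one]
  exact_mod_cast h

lemma abs_eval_chebyshevResidual_le {n : ℕ} {t l : ℝ} (hl : l ∈ Icc (chebyshevEdge t) 1) :
    |(chebyshevResidual n t).eval l| ≤ (cosh (n * t))⁻¹ := by
  have := cosh_sub_mul_chebyshevEdge t
  have h := Chebyshev.abs_eval_T_real_le_one n (x := cosh t - (cosh t + 1) * l)
    (abs_le.2 ⟨by nlinarith [hl.2, one_le_cosh t], by nlinarith [hl.1, one_le_cosh t]⟩)
  rw [eval_chebyshevResidual, abs_mul, abs_inv, abs_of_pos (cosh_pos _)]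
  exact mul_le_of_le_one_right (by positivity) h

theorem setIntegral_sq_le_of_abs_le {α : Type*} [MeasurableSpace α] {μ : Measure α}
    {s : Set α} {f : α → ℝ} {M : ℝ} (hs : μ s < ⊤) (hf : ∀ x ∈ s, |f x| ≤ M) :
    ∫ x in s, f x ^ 2 ∂μ ≤ M ^ 2 * μ.real s :=
  (Real.le_norm_self _).trans <| norm_setIntegral_le_of_norm_le_const hs fun x hx => by
    rw [norm_pow, Real.norm_eq_abs]
    exact pow_le_pow_left₀ (abs_nonneg _) (hf x hx) 2

theorem setIntegral_Icc_sq_le {μ : Measure ℝ} [IsFiniteMeasure μ] {f : ℝ → ℝ}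
    (hf : Continuous f) {a b c M₁ M₂ : ℝ} (hab : a ≤ b) (hbc : b ≤ c)
    (h₁ : ∀ x ∈ Icc a b, |f x| ≤ M₁) (h₂ : ∀ x ∈ Ioc b c, |f x| ≤ M₂) :
    ∫ x in Icc a c, f x ^ 2 ∂μ ≤
      M₁ ^ 2 * μ.real (Icc a b) + M₂ ^ 2 * μ.real (Ioc b c) := by
  have hf2 : Continuous fun x => f x ^ 2 := hf.pow 2
  have hdisj : Disjoint (Icc a b) (Ioc b c) :=
    (Iic_disjoint_Ioi le_rfl).mono Icc_subset_Iic_self Ioc_subset_Ioi_self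
  rw [← Icc_union_Ioc_eq_Icc hab hbc,
    setIntegral_union hdisj measurableSet_Ioc hf2.integrableOn_Icc hf2.integrableOn_Ioc]
  exact add_le_add (setIntegral_sq_le_of_abs_le (measure_lt_top _ _) h₁)
    (setIntegral_sq_le_of_abs_le (measure_lt_top _ _) h₂)

theorem measureReal_Icc_zero_le_rpow {ρ : Measure ℝ} {ζ a : ℝ} (h0 : ρ {0} = 0)
    (hpow : ∀ l ∈ Icc (0 : ℝ) 1, ρ.real (Ioc 0 l) ≤ l ^ ζ) (ha : a ∈ Icc (0 : ℝ) 1) :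
    ρ.real (Icc 0 a) ≤ a ^ ζ :=
  calc ρ.real (Icc 0 a) ≤ ρ.real {0} + ρ.real (Ioc 0 a) := by
        rw [← Ioc_insert_left ha.1, insert_eq]
        exact measureReal_union_le _ _
    _ = ρ.real (Ioc 0 a) := by simp [Measure.real, h0]
    _ ≤ a ^ ζ := hpow a ha

theorem setIntegral_sq_chebyshevResidual_le {ρ : Measure ℝ} [IsFiniteMeasure ρ] {ζ : ℝ}
    (h0 : ρ {0} = 0) (hpow : ∀ l ∈ Icc (0 : ℝ) 1, ρ.real (Ioc 0 l) ≤ l ^ ζ)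
    (n : ℕ) (t : ℝ) :
    ∫ l in Icc 0 1, (chebyshevResidual n t).eval l ^ 2 ∂ρ ≤
      chebyshevEdge t ^ ζ + (cosh (n * t))⁻¹ ^ 2 := by
  have ha := chebyshevEdge_nonneg t
  have hmass : ρ.real (Ioc (chebyshevEdge t) 1) ≤ 1 :=
    calc ρ.real (Ioc (chebyshevEdge t) 1) ≤ ρ.real (Ioc 0 1) :=
          measureReal_mono (Ioc_subset_Ioc_left ha)
      _ ≤ 1 := (hpow 1 ⟨zero_le_one, le_rfl⟩).trans (one_rpow ζ).le
  calc ∫ l in Icc 0 1, (chebyshevResidual n t).eval l ^ 2 ∂ρ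
      ≤ 1 ^ 2 * ρ.real (Icc 0 (chebyshevEdge t)) +
          (cosh (n * t))⁻¹ ^ 2 * ρ.real (Ioc (chebyshevEdge t) 1) :=
        setIntegral_Icc_sq_le (chebyshevResidual n t).continuous ha (chebyshevEdge_le_one t)
          (fun _ => abs_eval_chebyshevResidual_le_one)
          (fun _ hl => abs_eval_chebyshevResidual_le (Ioc_subset_Icc_self hl))
    _ ≤ chebyshevEdge t ^ ζ + (cosh (n * t))⁻¹ ^ 2 * 1 := by
        rw [one_pow, one_mul]
        gcongr
        exact measureReal_Icc_zero_le_rpow h0 hpow ⟨ha, chebyshevEdge_le_one t⟩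
    _ = chebyshevEdge t ^ ζ + (cosh (n * t))⁻¹ ^ 2 := by rw [mul_one]

lemma inv_cosh_le_two_mul_exp_neg (s : ℝ) : (cosh s)⁻¹ ≤ 2 * exp (-s) := by
  have h : exp (-s) * exp s = 1 := by rw [← exp_add, neg_add_cancel, exp_zero]
  rw [inv_le_iff_one_le_mul₀ (cosh_pos s), cosh_eq]
  nlinarith [sq_nonneg (exp (-s))]

lemma inv_cosh_mul_log_sq_le {y β : ℝ} (hy : 2 ≤ y) (hβ : 0 ≤ β) :
    (cosh (β * log y))⁻¹ ^ 2 ≤ 4 * (y ^ (-β) * log y ^ β) := by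
  have hy₀ : 0 < y := by linarith
  have hinv : (cosh (β * log y))⁻¹ ≤ 2 * y ^ (-β) := by
    rw [rpow_def_of_pos hy₀, mul_neg, mul_comm (log y)]
    exact inv_cosh_le_two_mul_exp_neg _
  have hlog : y ^ (-β) ≤ log y ^ β := by
    have : y⁻¹ ≤ log y := by
      have := log_two_gt_d9
      have := log_le_log two_pos hy
      have := inv_anti₀ two_pos hy
      linarith
    rw [rpow_neg hy₀.le, ← inv_rpow hy₀.le]
    exact rpow_le_rpow (by positivity) this hβ
  calc (cosh (β * log y))⁻¹ ^ 2 ≤ (2 * y ^ (-β)) ^ 2 :=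
        pow_le_pow_left₀ (by positivity) hinv 2
    _ = 4 * (y ^ (-β) * y ^ (-β)) := by ring
    _ ≤ 4 * (y ^ (-β) * log y ^ β) := by gcongr

/-- Conjugate Gradients under the power-law spectral condition `ρ((0,λ]) ≤ λ^ζ`:
there is a constant `C`, depending only on `ζ`, such that the `n`-step CG loss
(the infimum of `(1/2)∫ q² dρ` over residual polynomials of degree at most `n`)
satisfies the bound `C n^{-2ζ} (log n)^{2ζ}` for all `n ≥ 2`. -/
theorem cg_chebyshev_upper_bound (ζ : ℝ) (hζ : 0 < ζ) :
    ∃ C : ℝ, ∀ ρ : Measure ℝ, IsFiniteMeasure ρ →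
      ρ (Set.Icc (0:ℝ) 1)ᶜ = 0 → ρ {(0:ℝ)} = 0 →
      (∀ l ∈ Set.Icc (0:ℝ) 1, (ρ (Set.Ioc 0 l)).toReal ≤ l ^ ζ) →
      ∀ n : ℕ, 2 ≤ n →
        sInf {L : ℝ | ∃ q : Polynomial ℝ, q.natDegree ≤ n ∧ q.eval 0 = 1 ∧
            L = (1/2) * ∫ l in Set.Icc (0:ℝ) 1, (q.eval l) ^ 2 ∂ρ} ≤
          C * (n : ℝ) ^ (-(2 * ζ)) * (Real.log n) ^ (2 * ζ) := by
  refine ⟨((2 * ζ) ^ (2 * ζ) + 4) / 2, fun ρ _ _ h0 hpow n hn => ?_⟩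
  have hn₂ : (2 : ℝ) ≤ n := by exact_mod_cast hn
  have hlog : 0 < log n := log_pos (by linarith)
  set t := 2 * ζ * log n / n with ht_def
  have hnt : n * t = 2 * ζ * log n := by rw [ht_def]; field_simp
  have hq := setIntegral_sq_chebyshevResidual_le h0 hpow n t
  have hedge :
      chebyshevEdge t ^ ζ ≤ (2 * ζ) ^ (2 * ζ) * ((n : ℝ) ^ (-(2 * ζ)) * log n ^ (2 * ζ)) :=
    calc chebyshevEdge t ^ ζ ≤ t ^ (2 * ζ) := chebyshevEdge_rpow_le (by positivity) hζ.le
      _ = _ := by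
        rw [ht_def, mul_div_assoc, mul_rpow (by positivity) (by positivity),
          div_rpow hlog.le (by positivity), rpow_neg (by positivity), div_eq_inv_mul]
  have hcosh := inv_cosh_mul_log_sq_le hn₂ (by positivity : 0 ≤ 2 * ζ)
  rw [← hnt] at hcosh
  refine csInf_le_of_le ⟨0, ?_⟩ ⟨chebyshevResidual n t, natDegree_chebyshevResidual_le n t,
    eval_zero_chebyshevResidual n t, rfl⟩ ?_
  · rintro _ ⟨p, -, -, rfl⟩
    exact mul_nonneg one_half_pos.le (setIntegral_nonneg measurableSet_Icc fun l _ => sq_nonneg _)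
  · linarith
end

section
/- Let ζ>0 and let ρ be a finite Borel measure supported on [0,1] with ρ({0})=0 and ρ((0,λ]) ≤ λ^ζ for all λ ∈ [0,1]. Define the Steepest Descent iterates q_0 = 1, α_n = (∫ λ q_n(λ)² ρ(dλ)) / (∫ λ² q_n(λ)² ρ(dλ)), q_{n+1}(λ) = (1-α_nλ)q_n(λ), L_n = (1/2)∫ q_n(λ)² ρ(dλ), and assume ∫ λ² q_n(λ)² ρ(dλ) > 0 for every n. Then for every s with -ζ < s < 0 and every n ≥ 0, L_n ≤ ( L_0^{1/s} + (1/|s|)·(ζ/(2(s+ζ)))^{1/s}·n )^s. -/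
/-!
Write `m = ∫ q_n²`, `D = ∫ λ q_n²`, `S = ∫ λ² q_n²` and `W = ∫ λ^s q_n²`. The exact line search
gives `∫ q_{n+1}² = m - D² / S ≤ m - D`, because `λ ≤ 1` forces `S ≤ D`. The weighted moment `W`
never increases along the iteration: its change is controlled by a covariance of the increasing
`λ` and the decreasing `λ^s` (Chebyshev's inequality), and the power law bounds its initial value
`∫ λ^s dρ` by `ζ / (s + ζ)` (layer cake). Hölder's inequality interpolates `m` between `W` and `D`,
so `D ≥ m (m / W)^(-1/s)`, and the resulting recursion `m_{n+1} ≤ m_n (1 - (m_n / W)^(-1/s))` is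
summed by Bernoulli's inequality for the negative exponent `1/s`.
-/

open MeasureTheory Filter Set

namespace SteepestDescent

theorem one_sub_mul_le_rpow_one_sub {r u : ℝ} (hr : r ≤ 0) (hu : u < 1) :
    1 - r * u ≤ (1 - u) ^ r := by
  have hpos : 0 < 1 - u := by linarith
  have hlog : -u * r ≤ Real.log (1 - u) * r :=
    mul_le_mul_of_nonpos_right (by linarith [Real.log_le_sub_one_of_pos hpos]) hr
  rw [Real.rpow_def_of_pos hpos]
  linarith [Real.add_one_le_exp (Real.log (1 - u) * r)]

theorem le_rpow_of_le_sub_mul_rpow {s K : ℝ} {L : ℕ → ℝ} (hs : s < 0) (hK : 0 < K)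
    (hL : ∀ n, 0 < L n) (hstep : ∀ n, L (n + 1) ≤ L n - L n * (L n / K) ^ (-1 / s))
    (n : ℕ) :
    L n ≤ (L 0 ^ (1 / s) + 1 / |s| * K ^ (1 / s) * n) ^ s := by
  have hr : 1 / s ≤ 0 := by rw [one_div]; exact inv_nonpos.2 hs.le
  have hincr : ∀ n, L n ^ (1 / s) + 1 / |s| * K ^ (1 / s) ≤ L (n + 1) ^ (1 / s) := by
    intro n
    set u := (L n / K) ^ (-1 / s) with hu_def
    have hu : u < 1 := by nlinarith [hL n, hL (n + 1), hstep n]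
    have hLu : L n ^ (1 / s) * u = K ^ (1 / s) := by
      rw [hu_def, show -1 / s = -(1 / s) by ring, Real.rpow_neg (div_nonneg (hL n).le hK.le),
        ← Real.inv_rpow (div_nonneg (hL n).le hK.le), inv_div,
        ← Real.mul_rpow (hL n).le (div_nonneg hK.le (hL n).le), mul_div_cancel₀ _ (hL n).ne']
    calc L n ^ (1 / s) + 1 / |s| * K ^ (1 / s)
        = L n ^ (1 / s) * (1 - 1 / s * u) := by
          rw [abs_of_neg hs, ← hLu]
          ring
      _ ≤ L n ^ (1 / s) * (1 - u) ^ (1 / s) :=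
          mul_le_mul_of_nonneg_left (one_sub_mul_le_rpow_one_sub hr hu) (by positivity [hL n])
      _ = (L n * (1 - u)) ^ (1 / s) := (Real.mul_rpow (hL n).le (by linarith)).symm
      _ ≤ L (n + 1) ^ (1 / s) :=
          Real.rpow_le_rpow_of_nonpos (hL (n + 1)) (by linarith [hstep n]) hr
  have hsum : L 0 ^ (1 / s) + 1 / |s| * K ^ (1 / s) * n ≤ L n ^ (1 / s) := by
    induction n with
    | zero => simp
    | succ n ih => push_cast; linarith [hincr n]
  calc L n = (L n ^ (1 / s)) ^ s := by
        rw [← Real.rpow_mul (hL n).le, one_div_mul_cancel hs.ne, Real.rpow_one]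
    _ ≤ _ := Real.rpow_le_rpow_of_nonpos
        (add_pos_of_pos_of_nonneg (Real.rpow_pos_of_pos (hL 0) _) (by positivity)) hsum hs.le

theorem integral_mul_integral_le_of_antivaryOn {X : Type*} [MeasurableSpace X] {μ : Measure X}
    [SFinite μ] {w f g : X → ℝ} {t : Set X} (hfg : AntivaryOn f g t) (ht : ∀ᵐ x ∂μ, x ∈ t)
    (hw : ∀ᵐ x ∂μ, 0 ≤ w x) (hw_int : Integrable w μ)
    (hf_int : Integrable (fun x ↦ w x * f x) μ) (hg_int : Integrable (fun x ↦ w x * g x) μ)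
    (hfg_int : Integrable (fun x ↦ w x * (f x * g x)) μ) :
    (∫ x, w x ∂μ) * ∫ x, w x * (f x * g x) ∂μ
      ≤ (∫ x, w x * f x ∂μ) * ∫ x, w x * g x ∂μ := by
  have hfst := Measure.quasiMeasurePreserving_fst (μ := μ) (ν := μ)
  have hsnd := Measure.quasiMeasurePreserving_snd (μ := μ) (ν := μ)
  -- Integrate `w x w y (f x - f y)(g x - g y) ≤ 0` over the square.
  have hpair : ∀ᵐ z ∂μ.prod μ,
      w z.1 * (f z.1 * g z.1) * w z.2 + w z.1 * (w z.2 * (f z.2 * g z.2))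
        ≤ w z.1 * f z.1 * (w z.2 * g z.2) + w z.1 * g z.1 * (w z.2 * f z.2) := by
    filter_upwards [hfst.ae ht, hsnd.ae ht, hfst.ae hw, hsnd.ae hw] with z hx hy hwx hwy
    nlinarith [mul_nonpos_of_nonneg_of_nonpos (mul_nonneg hwx hwy)
      (hfg.sub_mul_sub_nonpos hx hy)]
  have key := integral_mono_ae ((hfg_int.mul_prod hw_int).add (hw_int.mul_prod hfg_int))
    ((hf_int.mul_prod hg_int).add (hg_int.mul_prod hf_int)) hpair
  simp only [Pi.add_apply] at key
  rw [integral_add (hfg_int.mul_prod hw_int) (hw_int.mul_prod hfg_int),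
    integral_add (hf_int.mul_prod hg_int) (hg_int.mul_prod hf_int),
    integral_prod_mul (fun x ↦ w x * (f x * g x)) w,
    integral_prod_mul w (fun x ↦ w x * (f x * g x)),
    integral_prod_mul (fun x ↦ w x * f x) (fun x ↦ w x * g x),
    integral_prod_mul (fun x ↦ w x * g x) (fun x ↦ w x * f x)] at key
  linarith

theorem integral_rpow_mul_rpow_le {X : Type*} [MeasurableSpace X] {μ : Measure X}
    {u v : X → ℝ} (hu : 0 ≤ᵐ[μ] u) (hv : 0 ≤ᵐ[μ] v) (hu_int : Integrable u μ)
    (hv_int : Integrable v μ)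
    {a b : ℝ} (ha : 0 ≤ a) (hb : 0 ≤ b) (hab : a + b = 1) :
    ∫ x, u x ^ a * v x ^ b ∂μ ≤ (∫ x, u x ∂μ) ^ a * (∫ x, v x ∂μ) ^ b := by
  have hmeas : AEStronglyMeasurable (fun x ↦ u x ^ a * v x ^ b) μ :=
    ((hu_int.1.aemeasurable.pow_const a).mul
      (hv_int.1.aemeasurable.pow_const b)).aestronglyMeasurable
  have hnonneg : 0 ≤ᵐ[μ] fun x ↦ u x ^ a * v x ^ b := by
    filter_upwards [hu, hv] with x hux hvx
    exact mul_nonneg (Real.rpow_nonneg hux a) (Real.rpow_nonneg hvx b)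
  rw [integral_eq_lintegral_of_nonneg_ae hnonneg hmeas]
  refine ENNReal.toReal_le_of_le_ofReal
    (mul_nonneg (Real.rpow_nonneg (integral_nonneg_of_ae hu) a)
      (Real.rpow_nonneg (integral_nonneg_of_ae hv) b)) ?_
  calc ∫⁻ x, ENNReal.ofReal (u x ^ a * v x ^ b) ∂μ
      = ∫⁻ x, ENNReal.ofReal (u x) ^ a * ENNReal.ofReal (v x) ^ b ∂μ := by
        refine lintegral_congr_ae ?_
        filter_upwards [hu, hv] with x hux hvx
        rw [ENNReal.ofReal_mul (Real.rpow_nonneg hux a), ENNReal.ofReal_rpow_of_nonneg hux ha,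
          ENNReal.ofReal_rpow_of_nonneg hvx hb]
    _ ≤ (∫⁻ x, ENNReal.ofReal (u x) ∂μ) ^ a * (∫⁻ x, ENNReal.ofReal (v x) ∂μ) ^ b :=
        ENNReal.lintegral_mul_norm_pow_le hu_int.1.aemeasurable.ennreal_ofReal
          hv_int.1.aemeasurable.ennreal_ofReal ha hb hab
    _ = ENNReal.ofReal ((∫ x, u x ∂μ) ^ a * (∫ x, v x ∂μ) ^ b) := by
        rw [← ofReal_integral_eq_lintegral_ofReal hu_int hu,
          ← ofReal_integral_eq_lintegral_ofReal hv_int hv,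
          ENNReal.ofReal_mul (Real.rpow_nonneg (integral_nonneg_of_ae hu) a),
          ENNReal.ofReal_rpow_of_nonneg (integral_nonneg_of_ae hu) ha,
          ENNReal.ofReal_rpow_of_nonneg (integral_nonneg_of_ae hv) hb]

variable {ρ : Measure ℝ}

theorem ae_mem_Ioc_of_measure_compl_Icc (hsupp : ρ (Icc (0:ℝ) 1)ᶜ = 0)
    (h0 : ρ {(0:ℝ)} = 0) :
    ∀ᵐ l ∂ρ, l ∈ Ioc (0:ℝ) 1 := by
  filter_upwards [measure_eq_zero_iff_ae_notMem.1 hsupp, measure_eq_zero_iff_ae_notMem.1 h0]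
    with l hl hl0
  rw [← Icc_sdiff_left]
  exact ⟨not_not.1 hl, hl0⟩

theorem lintegral_rpow_le_of_measure_Ioc_le {ζ s : ℝ} (hs : -ζ < s) (hs0 : s < 0)
    (hρ : ∀ᵐ l ∂ρ, l ∈ Ioc (0:ℝ) 1)
    (hpow : ∀ l ∈ Ioc (0:ℝ) 1, ρ (Ioc 0 l) ≤ ENNReal.ofReal (l ^ ζ)) :
    ∫⁻ l, ENNReal.ofReal (l ^ s) ∂ρ ≤ ENNReal.ofReal (ζ / (s + ζ)) := by
  have hexp : ζ / s < -1 := by rw [div_lt_iff_of_neg hs0]; linarith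
  have hmass : ∀ t, ρ {l | t < l ^ s} ≤ 1 := fun t ↦ calc
    ρ {l | t < l ^ s} ≤ ρ (Ioc 0 1) := measure_mono_ae (hρ.mono fun l hl _ ↦ hl)
    _ ≤ 1 := by simpa using hpow 1 (right_mem_Ioc.2 one_pos)
  have htail : ∀ t, 1 < t → ρ {l | t < l ^ s} ≤ ENNReal.ofReal (t ^ (ζ / s)) := by
    intro t ht
    have ht0 : 0 < t := one_pos.trans ht
    have hsub : {l | t < l ^ s} ≤ᵐ[ρ] Ioc 0 (t ^ (1 / s)) := by
      filter_upwards [hρ] with l hl hlt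
      refine ⟨hl.1, ?_⟩
      calc l = (l ^ s) ^ (1 / s) := by
            rw [← Real.rpow_mul hl.1.le, mul_one_div_cancel hs0.ne, Real.rpow_one]
        _ ≤ t ^ (1 / s) := Real.rpow_le_rpow_of_nonpos ht0 hlt.le (by
            rw [one_div]; exact inv_nonpos.2 hs0.le)
    calc ρ {l | t < l ^ s} ≤ ρ (Ioc 0 (t ^ (1 / s))) := measure_mono_ae hsub
      _ ≤ ENNReal.ofReal ((t ^ (1 / s)) ^ ζ) := hpow _ ⟨Real.rpow_pos_of_pos ht0 _,
          Real.rpow_le_one_of_one_le_of_nonpos ht.le (by rw [one_div]; exact inv_nonpos.2 hs0.le)⟩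
      _ = ENNReal.ofReal (t ^ (ζ / s)) := by rw [← Real.rpow_mul ht0.le, one_div_mul_eq_div]
  have hnonneg : 0 ≤ᵐ[ρ] fun l ↦ l ^ s := hρ.mono fun l hl ↦ Real.rpow_nonneg hl.1.le s
  rw [lintegral_eq_lintegral_meas_lt ρ hnonneg (measurable_id.pow_const s).aemeasurable,
    ← Ioc_union_Ioi_eq_Ioi zero_le_one,
    lintegral_union measurableSet_Ioi (Ioc_disjoint_Ioi le_rfl)]
  have hint := integrableOn_Ioi_rpow_of_lt hexp one_pos
  calc (∫⁻ t in Ioc 0 1, ρ {l | t < l ^ s}) + ∫⁻ t in Ioi 1, ρ {l | t < l ^ s}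
      ≤ (∫⁻ _ in Ioc (0:ℝ) 1, 1) + ∫⁻ t in Ioi 1, ENNReal.ofReal (t ^ (ζ / s)) :=
        add_le_add (lintegral_mono fun t ↦ hmass t) (setLIntegral_mono' measurableSet_Ioi htail)
    _ = ENNReal.ofReal 1 + ENNReal.ofReal (-s / (s + ζ)) := by
        rw [setLIntegral_one, Real.volume_Ioc, sub_zero,
          ← ofReal_integral_eq_lintegral_ofReal hint (ae_restrict_of_forall_mem measurableSet_Ioi
            fun t ht ↦ Real.rpow_nonneg (zero_le_one.trans (le_of_lt ht)) _),
          integral_Ioi_rpow_of_lt hexp one_pos]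
        congr 2
        rw [Real.one_rpow, div_add_one hs0.ne, div_div_eq_mul_div, neg_one_mul, add_comm]
    _ = ENNReal.ofReal (ζ / (s + ζ)) := by
        rw [← ENNReal.ofReal_add zero_le_one (div_nonneg (by linarith) (by linarith))]
        congr 1
        field_simp [show s + ζ ≠ 0 by linarith]
        ring

theorem integrable_rpow_and_integral_rpow_le_of_measure_Ioc_le {ζ s : ℝ} (hs : -ζ < s)
    (hs0 : s < 0) (hρ : ∀ᵐ l ∂ρ, l ∈ Ioc (0:ℝ) 1)
    (hpow : ∀ l ∈ Ioc (0:ℝ) 1, ρ (Ioc 0 l) ≤ ENNReal.ofReal (l ^ ζ)) :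
    Integrable (fun l ↦ l ^ s) ρ ∧ ∫ l, l ^ s ∂ρ ≤ ζ / (s + ζ) := by
  have hbound := lintegral_rpow_le_of_measure_Ioc_le hs hs0 hρ hpow
  have hnonneg : 0 ≤ᵐ[ρ] fun l ↦ l ^ s := hρ.mono fun l hl ↦ Real.rpow_nonneg hl.1.le s
  have hmeas := (measurable_id.pow_const s).aestronglyMeasurable (μ := ρ)
  refine ⟨⟨hmeas, (hasFiniteIntegral_iff_ofReal hnonneg).2
    (hbound.trans_lt ENNReal.ofReal_lt_top)⟩, ?_⟩
  rw [integral_eq_lintegral_of_nonneg_ae hnonneg hmeas]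
  exact ENNReal.toReal_le_of_le_ofReal (div_nonneg (by linarith) (by linarith)) hbound

theorem integrable_of_continuous [IsFiniteMeasure ρ] (hρ : ∀ᵐ l ∂ρ, l ∈ Ioc (0:ℝ) 1)
    {f : ℝ → ℝ} (hf : Continuous f) : Integrable f ρ := by
  rw [← Measure.restrict_eq_self_of_ae_mem (hρ.mono fun l hl ↦ Ioc_subset_Icc_self hl)]
  exact hf.continuousOn.integrableOn_compact isCompact_Icc

theorem integrable_rpow_mul_of_continuous {s : ℝ} (hρ : ∀ᵐ l ∂ρ, l ∈ Ioc (0:ℝ) 1)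
    (hs : Integrable (fun l ↦ l ^ s) ρ) {f : ℝ → ℝ} (hf : Continuous f) :
    Integrable (fun l ↦ l ^ s * f l) ρ := by
  obtain ⟨C, hC⟩ :=
    (isCompact_Icc (a := (0:ℝ)) (b := 1)).exists_bound_of_continuousOn hf.continuousOn
  exact hs.mul_bdd hf.aestronglyMeasurable (hρ.mono fun l hl ↦ hC l (Ioc_subset_Icc_self hl))

theorem integral_mul_sq_one_sub_mul (w Q : ℝ → ℝ) (α : ℝ)
    (h0 : Integrable (fun l ↦ w l * Q l ^ 2) ρ)
    (h1 : Integrable (fun l ↦ w l * (l * Q l ^ 2)) ρ)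
    (h2 : Integrable (fun l ↦ w l * (l ^ 2 * Q l ^ 2)) ρ) :
    ∫ l, w l * ((1 - α * l) * Q l) ^ 2 ∂ρ
      = ∫ l, w l * Q l ^ 2 ∂ρ - 2 * α * ∫ l, w l * (l * Q l ^ 2) ∂ρ
        + α ^ 2 * ∫ l, w l * (l ^ 2 * Q l ^ 2) ∂ρ := by
  have h01 : Integrable (fun l ↦ w l * Q l ^ 2 - 2 * α * (w l * (l * Q l ^ 2))) ρ :=
    h0.sub (h1.const_mul _)
  rw [← integral_const_mul, ← integral_const_mul, ← integral_sub h0 (h1.const_mul _),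
    ← integral_add h01 (h2.const_mul _)]
  exact integral_congr_ae (ae_of_all _ fun l ↦ by ring)

variable [IsFiniteMeasure ρ] {Q Q' : ℝ → ℝ} {α : ℝ}

theorem integral_pow_mul_sq_le_of_le (hρ : ∀ᵐ l ∂ρ, l ∈ Ioc (0:ℝ) 1) (hQ : Continuous Q)
    {j k : ℕ} (hjk : j ≤ k) : ∫ l, l ^ k * Q l ^ 2 ∂ρ ≤ ∫ l, l ^ j * Q l ^ 2 ∂ρ :=
  integral_mono_ae (integrable_of_continuous hρ (by fun_prop))
    (integrable_of_continuous hρ (by fun_prop)) (hρ.mono fun _ hl ↦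
      mul_le_mul_of_nonneg_right (pow_le_pow_of_le_one hl.1.le hl.2 hjk) (sq_nonneg _))

theorem integral_sq_le_of_steepest_step (hρ : ∀ᵐ l ∂ρ, l ∈ Ioc (0:ℝ) 1)
    (hQ : Continuous Q)
    (hQ' : ∀ l, Q' l = (1 - α * l) * Q l)
    (hα : α = (∫ l, l * Q l ^ 2 ∂ρ) / ∫ l, l ^ 2 * Q l ^ 2 ∂ρ)
    (hS : 0 < ∫ l, l ^ 2 * Q l ^ 2 ∂ρ) :
    ∫ l, Q' l ^ 2 ∂ρ ≤ ∫ l, Q l ^ 2 ∂ρ - ∫ l, l * Q l ^ 2 ∂ρ := by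
  have hI : ∀ {f : ℝ → ℝ}, Continuous f → Integrable f ρ := integrable_of_continuous hρ
  have hexp := integral_mul_sq_one_sub_mul (ρ := ρ) (fun _ ↦ 1) Q α
    (hI (by fun_prop)) (hI (by fun_prop)) (hI (by fun_prop))
  simp only [one_mul, ← hQ'] at hexp
  set D := ∫ l, l * Q l ^ 2 ∂ρ
  set S := ∫ l, l ^ 2 * Q l ^ 2 ∂ρ
  have hSD : S ≤ D := by simpa using integral_pow_mul_sq_le_of_le hρ hQ one_le_two
  have hDD : D ≤ D ^ 2 / S := by
    rw [le_div_iff₀ hS]; nlinarith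
  rw [hexp, hα]
  field_simp
  nlinarith [hDD]

theorem integral_rpow_mul_sq_le_of_steepest_step {s : ℝ} (hs : s ≤ 0)
    (hρ : ∀ᵐ l ∂ρ, l ∈ Ioc (0:ℝ) 1) (hint : Integrable (fun l ↦ l ^ s) ρ)
    (hQ : Continuous Q)
    (hQ' : ∀ l, Q' l = (1 - α * l) * Q l)
    (hα : α = (∫ l, l * Q l ^ 2 ∂ρ) / ∫ l, l ^ 2 * Q l ^ 2 ∂ρ)
    (hS : 0 < ∫ l, l ^ 2 * Q l ^ 2 ∂ρ) :
    ∫ l, l ^ s * Q' l ^ 2 ∂ρ ≤ ∫ l, l ^ s * Q l ^ 2 ∂ρ := by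
  have hI : ∀ {f : ℝ → ℝ}, Continuous f → Integrable f ρ := integrable_of_continuous hρ
  have hIs : ∀ {f : ℝ → ℝ}, Continuous f → Integrable (fun l ↦ l ^ s * f l) ρ :=
    integrable_rpow_mul_of_continuous hρ hint
  have hexp := integral_mul_sq_one_sub_mul (ρ := ρ) (fun l ↦ l ^ s) Q α
    (hIs (by fun_prop)) (hIs (by fun_prop)) (hIs (by fun_prop))
  simp only [← hQ'] at hexp
  set D := ∫ l, l * Q l ^ 2 ∂ρ
  set S := ∫ l, l ^ 2 * Q l ^ 2 ∂ρ
  set T₁ := ∫ l, l ^ s * (l * Q l ^ 2) ∂ρ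
  set T₂ := ∫ l, l ^ s * (l ^ 2 * Q l ^ 2) ∂ρ
  have hpos : ∀ᵐ l ∂ρ, l ∈ Ioi (0:ℝ) := hρ.mono fun l hl ↦ hl.1
  have hcheb : D * T₂ ≤ S * T₁ := by
    have hT₂ : T₂ = ∫ l, l * Q l ^ 2 * (l * l ^ s) ∂ρ :=
      integral_congr_ae (ae_of_all _ fun l ↦ by ring)
    have hS : S = ∫ l, l * Q l ^ 2 * l ∂ρ := integral_congr_ae (ae_of_all _ fun l ↦ by ring)
    have hT₁ : T₁ = ∫ l, l * Q l ^ 2 * l ^ s ∂ρ :=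
      integral_congr_ae (ae_of_all _ fun l ↦ by ring)
    rw [hT₂, hS, hT₁]
    exact integral_mul_integral_le_of_antivaryOn (f := id)
      (monotoneOn_id.antivaryOn (Real.antitoneOn_rpow_Ioi_of_exponent_nonpos hs)) hpos
      (hpos.mono fun l hl ↦ mul_nonneg (le_of_lt hl) (sq_nonneg _))
      (hI (by fun_prop)) (hI (by fun_prop))
      ((hIs (f := fun l ↦ l * Q l ^ 2) (by fun_prop)).congr (ae_of_all _ fun l ↦ mul_comm _ _))
      ((hIs (f := fun l ↦ l ^ 2 * Q l ^ 2) (by fun_prop)).congr (ae_of_all _ fun l ↦ by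
        simp only [id]; ring))
  have hD : 0 ≤ D :=
    integral_nonneg_of_ae (hpos.mono fun l hl ↦ mul_nonneg (le_of_lt hl) (sq_nonneg _))
  have hT₁ : 0 ≤ T₁ := integral_nonneg_of_ae (hpos.mono fun l hl ↦
    mul_nonneg (Real.rpow_nonneg (le_of_lt hl) s) (mul_nonneg (le_of_lt hl) (sq_nonneg _)))
  have hαT : α * T₂ ≤ T₁ := by
    rw [hα, div_mul_eq_mul_div, div_le_iff₀ hS]; linarith
  have hα0 : 0 ≤ α := hα ▸ div_nonneg hD hS.le
  rw [hexp]
  nlinarith [mul_le_mul_of_nonneg_left hαT hα0, mul_nonneg hα0 hT₁]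

-- Hölder, from `Q² = (l ^ s Q²) ^ a (l Q²) ^ b` on `(0, 1]` with `a + b = 1`.
theorem integral_sq_le_rpow_mul_rpow {s : ℝ} (hs : s < 0)
    (hρ : ∀ᵐ l ∂ρ, l ∈ Ioc (0:ℝ) 1)
    (hint : Integrable (fun l ↦ l ^ s) ρ) (hQ : Continuous Q) :
    ∫ l, Q l ^ 2 ∂ρ
      ≤ (∫ l, l ^ s * Q l ^ 2 ∂ρ) ^ (1 / (1 - s))
        * (∫ l, l * Q l ^ 2 ∂ρ) ^ (-s / (1 - s)) := by
  set a := 1 / (1 - s) with ha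
  set b := -s / (1 - s) with hb
  have h1s : 0 < 1 - s := by linarith
  have hab : a + b = 1 := by rw [ha, hb]; field_simp; ring
  have hpos : ∀ᵐ l ∂ρ, 0 < l := hρ.mono fun l hl ↦ hl.1
  calc ∫ l, Q l ^ 2 ∂ρ = ∫ l, (l ^ s * Q l ^ 2) ^ a * (l * Q l ^ 2) ^ b ∂ρ := by
        refine integral_congr_ae (hpos.mono fun l hl ↦ ?_)
        dsimp only
        rw [Real.mul_rpow (Real.rpow_nonneg hl.le s) (sq_nonneg _),
          Real.mul_rpow hl.le (sq_nonneg _), ← Real.rpow_mul hl.le]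
        calc Q l ^ 2 = l ^ (s * a + b) * (Q l ^ 2) ^ (a + b) := by
              rw [show s * a + b = 0 by rw [ha, hb]; ring, hab, Real.rpow_zero, Real.rpow_one,
                one_mul]
          _ = l ^ (s * a) * (Q l ^ 2) ^ a * (l ^ b * (Q l ^ 2) ^ b) := by
              rw [Real.rpow_add hl, Real.rpow_add' (sq_nonneg _) (by rw [hab]; norm_num)]
              ring
    _ ≤ _ := integral_rpow_mul_rpow_le
        (hpos.mono fun l hl ↦ mul_nonneg (Real.rpow_nonneg hl.le s) (sq_nonneg _))
        (hpos.mono fun l hl ↦ mul_nonneg hl.le (sq_nonneg _))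
        (integrable_rpow_mul_of_continuous hρ hint (by fun_prop))
        (integrable_of_continuous hρ (by fun_prop)) (by positivity)
        (div_nonneg (by linarith) h1s.le) hab

theorem integral_sq_mul_rpow_le {s M : ℝ} (hs : s < 0) (hρ : ∀ᵐ l ∂ρ, l ∈ Ioc (0:ℝ) 1)
    (hint : Integrable (fun l ↦ l ^ s) ρ) (hQ : Continuous Q)
    (hM : ∫ l, l ^ s * Q l ^ 2 ∂ρ ≤ M) :
    (∫ l, Q l ^ 2 ∂ρ) * ((∫ l, Q l ^ 2 ∂ρ) / M) ^ (-1 / s)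
      ≤ ∫ l, l * Q l ^ 2 ∂ρ := by
  have hholder := integral_sq_le_rpow_mul_rpow hs hρ hint hQ
  set m := ∫ l, Q l ^ 2 ∂ρ
  set D := ∫ l, l * Q l ^ 2 ∂ρ
  set W := ∫ l, l ^ s * Q l ^ 2 ∂ρ
  set r := -1 / s with hr
  set a := 1 / (1 - s) with ha
  set b := -s / (1 - s) with hb
  have hr0 : 0 < r := div_pos_of_neg_of_neg (by norm_num) hs
  have h1s : 0 < 1 - s := by linarith
  have ha0 : 0 ≤ a := by positivity
  have hb0 : 0 < b := div_pos (by linarith) h1s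
  have hm : 0 ≤ m := integral_nonneg fun l ↦ sq_nonneg _
  have hpos : ∀ᵐ l ∂ρ, 0 < l := hρ.mono fun l hl ↦ hl.1
  have hD : 0 ≤ D := integral_nonneg_of_ae (hpos.mono fun l hl ↦ mul_nonneg hl.le (sq_nonneg _))
  have hW : 0 ≤ W := integral_nonneg_of_ae (hpos.mono fun l hl ↦
    mul_nonneg (Real.rpow_nonneg hl.le s) (sq_nonneg _))
  have hM0 : 0 ≤ M := hW.trans hM
  have key : m * m ^ r ≤ M ^ r * D := by
    calc m * m ^ r = m ^ (1 / b) := by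
          rw [show 1 / b = 1 + r by rw [hb, hr]; field_simp [hs.ne, h1s.ne']; ring,
            Real.rpow_one_add' hm (by linarith)]
      _ ≤ (M ^ a * D ^ b) ^ (1 / b) := by
          gcongr
          exact hholder.trans (by gcongr)
      _ = M ^ r * D := by
          rw [Real.mul_rpow (Real.rpow_nonneg hM0 a) (Real.rpow_nonneg hD b),
            ← Real.rpow_mul hM0, ← Real.rpow_mul hD,
            show a * (1 / b) = r by rw [ha, hb, hr]; field_simp [hs.ne, h1s.ne'],
            mul_one_div_cancel hb0.ne', Real.rpow_one]
  rw [Real.div_rpow hm hM0, ← mul_div_assoc]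
  exact div_le_of_le_mul₀ (by positivity) hD (by linarith)

end SteepestDescent

open SteepestDescent

/-- Steepest Descent under the power-law spectral condition `ρ((0,λ]) ≤ λ^ζ`:
for every `-ζ < s < 0`, the SD losses obey
`L_n ≤ (L_0^{1/s} + (1/|s|)(ζ/(2(s+ζ)))^{1/s} n)^s`. -/
theorem steepest_descent_power_law_upper_bound
    (ζ : ℝ) (hζ : 0 < ζ)
    (ρ : Measure ℝ) [IsFiniteMeasure ρ]
    (hsupp : ρ (Set.Icc (0:ℝ) 1)ᶜ = 0)
    (h0 : ρ {(0:ℝ)} = 0)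
    (hpow : ∀ l ∈ Set.Icc (0:ℝ) 1, (ρ (Set.Ioc 0 l)).toReal ≤ l ^ ζ)
    (q : ℕ → ℝ → ℝ) (A : ℕ → ℝ)
    (hq0 : ∀ l, q 0 l = 1)
    (hA : ∀ n, A n = (∫ l, l * (q n l) ^ 2 ∂ρ) / ∫ l, l ^ 2 * (q n l) ^ 2 ∂ρ)
    (hqrec : ∀ n l, q (n + 1) l = (1 - A n * l) * q n l)
    (hpos : ∀ n, 0 < ∫ l, l ^ 2 * (q n l) ^ 2 ∂ρ) :
    ∀ s : ℝ, -ζ < s → s < 0 → ∀ n : ℕ,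
      (1/2) * ∫ l, (q n l) ^ 2 ∂ρ ≤
        (((1/2) * ∫ l, (q 0 l) ^ 2 ∂ρ) ^ (1/s) +
            (1/|s|) * (ζ / (2 * (s + ζ))) ^ (1/s) * n) ^ s := by
  intro s hs hs0
  have hρ := ae_mem_Ioc_of_measure_compl_Icc hsupp h0
  obtain ⟨hint, hW0⟩ := integrable_rpow_and_integral_rpow_le_of_measure_Ioc_le hs hs0 hρ
    fun l hl ↦ (ENNReal.le_ofReal_iff_toReal_le (measure_ne_top _ _)
      (Real.rpow_nonneg hl.1.le ζ)).2 (hpow l (Ioc_subset_Icc_self hl))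
  have hq : ∀ n, Continuous (q n) := by
    intro n
    induction n with
    | zero => exact (funext hq0 : q 0 = fun _ ↦ 1) ▸ continuous_const
    | succ n ih => exact (funext (hqrec n)).symm ▸ by fun_prop
  have hW : ∀ n, ∫ l, l ^ s * q n l ^ 2 ∂ρ ≤ ζ / (s + ζ) := by
    intro n
    induction n with
    | zero => simpa only [hq0, one_pow, mul_one] using hW0
    | succ n ih => exact (integral_rpow_mul_sq_le_of_steepest_step hs0.le hρ hint (hq n)
        (hqrec n) (hA n) (hpos n)).trans ih
  have hm : ∀ n, 0 < ∫ l, q n l ^ 2 ∂ρ := fun n ↦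
    (hpos n).trans_le (by simpa using integral_pow_mul_sq_le_of_le hρ (hq n) zero_le_two)
  refine le_rpow_of_le_sub_mul_rpow hs0 (div_pos hζ (by linarith))
    (fun n ↦ mul_pos one_half_pos (hm n)) fun n ↦ ?_
  have hK : (1 / 2 * ∫ l, q n l ^ 2 ∂ρ) / (ζ / (2 * (s + ζ)))
      = (∫ l, q n l ^ 2 ∂ρ) / (ζ / (s + ζ)) := by
    field_simp
  rw [hK]
  linarith [integral_sq_le_of_steepest_step hρ (hq n) (hqrec n) (hA n) (hpos n),
    integral_sq_mul_rpow_le hs0 hρ hint (hq n) (hW n)]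
end

section
/- Let μ be a finite Borel measure supported on (0,1] and let s ≤ 0 be such that ∫ λ^{s+1} μ(dλ) < ∞ and ∫ λ^{s+2} μ(dλ) < ∞. Then (∫ λ μ(dλ)) · (∫ λ^{s+2} μ(dλ)) ≤ (∫ λ² μ(dλ)) · (∫ λ^{s+1} μ(dλ)). -/
open MeasureTheory Set

/-- The Hölder-type inequality behind the Steepest Descent analysis: for a finite measure
`μ` supported on `(0,1]` and `s ≤ 0` with `λ^{s+1}` and `λ^{s+2}` integrable,
`(∫ λ dμ)(∫ λ^{s+2} dμ) ≤ (∫ λ² dμ)(∫ λ^{s+1} dμ)`. -/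
theorem steepest_descent_holder_inequality
    (μ : Measure ℝ) [IsFiniteMeasure μ]
    (hsupp : μ (Set.Ioc (0:ℝ) 1)ᶜ = 0)
    (s : ℝ) (hs : s ≤ 0)
    (hint1 : Integrable (fun l : ℝ => l ^ (s + 1)) μ)
    (hint2 : Integrable (fun l : ℝ => l ^ (s + 2)) μ) :
    (∫ l, l ∂μ) * (∫ l, l ^ (s + 2) ∂μ) ≤
      (∫ l, l ^ 2 ∂μ) * (∫ l, l ^ (s + 1) ∂μ) := by
  have hae : ∀ᵐ x ∂μ, x ∈ Set.Ioc (0:ℝ) 1 := by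
    rw [MeasureTheory.ae_iff]
    exact hsupp
  -- integrability of x and x^2
  have hId : Integrable (fun x : ℝ => x) μ := by
    refine Integrable.mono' (integrable_const 1) measurable_id.aestronglyMeasurable ?_
    filter_upwards [hae] with x hx
    rw [Real.norm_eq_abs, abs_of_pos hx.1]
    exact hx.2
  have hSq : Integrable (fun x : ℝ => x ^ 2) μ := by
    refine Integrable.mono' (integrable_const 1) ((measurable_id.pow_const 2).aestronglyMeasurable) ?_
    filter_upwards [hae] with x hx
    rw [Real.norm_eq_abs, abs_of_pos (pow_pos hx.1 2)]
    calc x ^ 2 ≤ 1 ^ 2 := pow_le_pow_left₀ hx.1.le hx.2 2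
    _ = 1 := one_pow 2
  -- product measure setup
  have h1 : Integrable (fun z : ℝ × ℝ => z.1 ^ 2 * z.2 ^ (s + 1)) (μ.prod μ) :=
    hSq.mul_prod hint1
  have h2 : Integrable (fun z : ℝ × ℝ => z.1 * z.2 ^ (s + 2)) (μ.prod μ) :=
    hId.mul_prod hint2
  have h3 : Integrable (fun z : ℝ × ℝ => z.2 ^ 2 * z.1 ^ (s + 1)) (μ.prod μ) :=
    (hint1.mul_prod hSq).congr (by filter_upwards with z using mul_comm _ _)
  have h4 : Integrable (fun z : ℝ × ℝ => z.2 * z.1 ^ (s + 2)) (μ.prod μ) :=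
    (hint2.mul_prod hId).congr (by filter_upwards with z using mul_comm _ _)
  -- a.e. membership on the product
  have haeP : ∀ᵐ z ∂(μ.prod μ), z.1 ∈ Set.Ioc (0:ℝ) 1 ∧ z.2 ∈ Set.Ioc (0:ℝ) 1 := by
    have m1 : ∀ᵐ z ∂(μ.prod μ), z.1 ∈ Set.Ioc (0:ℝ) 1 := by
      rw [MeasureTheory.ae_iff]
      have : {z : ℝ × ℝ | ¬ z.1 ∈ Set.Ioc (0:ℝ) 1} = (Set.Ioc (0:ℝ) 1)ᶜ ×ˢ (Set.univ : Set ℝ) := by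
        ext z; simp [Set.mem_prod]
      rw [this, Measure.prod_prod, hsupp, zero_mul]
    have m2 : ∀ᵐ z ∂(μ.prod μ), z.2 ∈ Set.Ioc (0:ℝ) 1 := by
      rw [MeasureTheory.ae_iff]
      have : {z : ℝ × ℝ | ¬ z.2 ∈ Set.Ioc (0:ℝ) 1} = (Set.univ : Set ℝ) ×ˢ (Set.Ioc (0:ℝ) 1)ᶜ := by
        ext z; simp [Set.mem_prod]
      rw [this, Measure.prod_prod, hsupp, mul_zero]
    exact m1.and m2
  -- pointwise nonnegativity
  have key : ∀ᵐ z ∂(μ.prod μ), 0 ≤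
      z.1 ^ 2 * z.2 ^ (s + 1) - z.1 * z.2 ^ (s + 2)
        + (z.2 ^ 2 * z.1 ^ (s + 1) - z.2 * z.1 ^ (s + 2)) := by
    filter_upwards [haeP] with z hz
    obtain ⟨⟨hx0, hx1⟩, ⟨hy0, hy1⟩⟩ := hz
    set x := z.1; set y := z.2
    have ex1 : x ^ (s + 1) = x ^ s * x := by
      rw [Real.rpow_add hx0, Real.rpow_one]
    have ex2 : x ^ (s + 2) = x ^ s * x ^ 2 := by
      rw [Real.rpow_add hx0, Real.rpow_two]
    have ey1 : y ^ (s + 1) = y ^ s * y := by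
      rw [Real.rpow_add hy0, Real.rpow_one]
    have ey2 : y ^ (s + 2) = y ^ s * y ^ 2 := by
      rw [Real.rpow_add hy0, Real.rpow_two]
    rw [ex1, ex2, ey1, ey2]
    have hfact : x ^ 2 * (y ^ s * y) - x * (y ^ s * y ^ 2)
        + (y ^ 2 * (x ^ s * x) - y * (x ^ s * x ^ 2))
        = x * y * ((x - y) * (y ^ s - x ^ s)) := by ring
    rw [hfact]
    rcases le_total x y with hxy | hxy
    · have hp : y ^ s ≤ x ^ s := Real.rpow_le_rpow_of_nonpos hx0 hxy hs
      exact mul_nonneg (mul_nonneg hx0.le hy0.le)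
        (by nlinarith)
    · have hp : x ^ s ≤ y ^ s := Real.rpow_le_rpow_of_nonpos hy0 hxy hs
      exact mul_nonneg (mul_nonneg hx0.le hy0.le)
        (mul_nonneg (by linarith) (by linarith))
  -- integrate
  have hInt : 0 ≤ ∫ z, (z.1 ^ 2 * z.2 ^ (s + 1) - z.1 * z.2 ^ (s + 2)
      + (z.2 ^ 2 * z.1 ^ (s + 1) - z.2 * z.1 ^ (s + 2))) ∂(μ.prod μ) :=
    integral_nonneg_of_ae key
  have eadd : (∫ z : ℝ × ℝ, (z.1 ^ 2 * z.2 ^ (s + 1) - z.1 * z.2 ^ (s + 2)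
        + (z.2 ^ 2 * z.1 ^ (s + 1) - z.2 * z.1 ^ (s + 2))) ∂(μ.prod μ))
      = (∫ z : ℝ × ℝ, (z.1 ^ 2 * z.2 ^ (s + 1) - z.1 * z.2 ^ (s + 2)) ∂(μ.prod μ))
        + ∫ z : ℝ × ℝ, (z.2 ^ 2 * z.1 ^ (s + 1) - z.2 * z.1 ^ (s + 2)) ∂(μ.prod μ) :=
    integral_add (h1.sub h2) (h3.sub h4)
  have esub1 : (∫ z : ℝ × ℝ, (z.1 ^ 2 * z.2 ^ (s + 1) - z.1 * z.2 ^ (s + 2)) ∂(μ.prod μ))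
      = (∫ z : ℝ × ℝ, z.1 ^ 2 * z.2 ^ (s + 1) ∂(μ.prod μ))
        - ∫ z : ℝ × ℝ, z.1 * z.2 ^ (s + 2) ∂(μ.prod μ) := integral_sub h1 h2
  have esub2 : (∫ z : ℝ × ℝ, (z.2 ^ 2 * z.1 ^ (s + 1) - z.2 * z.1 ^ (s + 2)) ∂(μ.prod μ))
      = (∫ z : ℝ × ℝ, z.2 ^ 2 * z.1 ^ (s + 1) ∂(μ.prod μ))
        - ∫ z : ℝ × ℝ, z.2 * z.1 ^ (s + 2) ∂(μ.prod μ) := integral_sub h3 h4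
  rw [eadd, esub1, esub2,
    integral_prod_mul (fun x : ℝ => x ^ 2) (fun y : ℝ => y ^ (s + 1)),
    integral_prod_mul (fun x : ℝ => x) (fun y : ℝ => y ^ (s + 2))] at hInt
  have e3 : ∫ z : ℝ × ℝ, z.2 ^ 2 * z.1 ^ (s + 1) ∂(μ.prod μ)
      = (∫ l, l ^ (s + 1) ∂μ) * ∫ l, l ^ 2 ∂μ := by
    rw [show (fun z : ℝ × ℝ => z.2 ^ 2 * z.1 ^ (s + 1))
        = fun z : ℝ × ℝ => z.1 ^ (s + 1) * z.2 ^ 2 from funext fun z => mul_comm _ _]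
    exact integral_prod_mul (fun x : ℝ => x ^ (s + 1)) (fun y : ℝ => y ^ 2)
  have e4 : ∫ z : ℝ × ℝ, z.2 * z.1 ^ (s + 2) ∂(μ.prod μ)
      = (∫ l, l ^ (s + 2) ∂μ) * ∫ l, l ∂μ := by
    rw [show (fun z : ℝ × ℝ => z.2 * z.1 ^ (s + 2))
        = fun z : ℝ × ℝ => z.1 ^ (s + 2) * z.2 from funext fun z => mul_comm _ _]
    exact integral_prod_mul (fun x : ℝ => x ^ (s + 2)) (fun y : ℝ => y)
  rw [e3, e4] at hInt
  nlinarith [hInt]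
end

section
/- Let 0 < ε < 1 and let ρ be a finite Borel measure supported on the set [0,ε] ∪ {1}, with ρ({0}) = 0. Let σ be the measure σ(dλ) = λ ρ(dλ), and assume σ((0,ε]) > 0 and σ({1}) > 0. Suppose there is a real number b such that exp(2ε(1+b)²/(1-ε)²) · max( σ((0,ε])/σ({1}), σ({1})/σ((0,ε]) ) ≤ b ≤ 1/(2ε) − 1. Define the Steepest Descent iterates q_0 = 1, α_n = (∫ λ q_n(λ)² ρ(dλ)) / (∫ λ² q_n(λ)² ρ(dλ)), q_{n+1}(λ) = (1-α_nλ)q_n(λ). Then α_n ≤ 1/(2ε) for every n ≥ 0. -/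
/-!
Split `σ` into its part `σ_ε` on `[0, ε]` and the atom `τ δ₁`. With `mₖ = ∫ λᵏ q_n² dσ_ε` and
`t = τ q_n(1)²`, the steepest descent rate is `α = (m₀ + t) / (m₁ + t)`, so `α ≤ 1/(2ε)` as long as
the balance `m₀ / t` stays below `b`. A step multiplies `t` by `(1 - α)²`, and the exact identity
`m₀' m₀ - t' t = α² (m₀ m₂ - m₁²)` shows that the dominant cluster swaps (`t' t ≤ m₀' m₀`) while the
balance grows at most by the factor `1 + C Δ`, where `Δ` is the decrease of the Rayleigh quotient
`m₁ / m₀` and `C = ((1 + b) / (1 - ε))²`; the decrease is at least `Var / m₀²` because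
`Cov(λ, λ²) ≤ 2ε Var(λ)` on `[0, ε]`. Therefore `V = max (m₀ / t) (t / m₀) · exp (C m₁ / m₀)` never
increases, and as `m₁ / m₀ ∈ [0, ε]` the balance stays below `exp (ε C) · max (m₀ / t) (t / m₀)` at
`n = 0`, which is at most `b`.
-/

open MeasureTheory Filter Set Real

lemma max_div_le_of_mul_le {a b a' b' E : ℝ} (ha : 0 < a) (hb : 0 < b) (ha' : 0 < a')
    (hb' : 0 < b') (hlow : b' * b ≤ a' * a) (hup : a' * a ≤ E * (b' * b)) (hE : 1 ≤ E) :
    max (a' / b') (b' / a') ≤ E * max (a / b) (b / a) := by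
  have hmax : 0 ≤ max (a / b) (b / a) := (div_pos ha hb).le.trans (le_max_left _ _)
  refine max_le ?_ ?_
  · calc a' / b' ≤ E * (b / a) := by
          rw [div_le_iff₀ hb', show E * (b / a) * b' = E * (b' * b) / a by ring,
            le_div_iff₀ ha]
          exact hup
      _ ≤ E * max (a / b) (b / a) := mul_le_mul_of_nonneg_left (le_max_right _ _) (by linarith)
  · calc b' / a' ≤ a / b := by rw [div_le_div_iff₀ ha' hb]; linarith
      _ ≤ max (a / b) (b / a) := le_max_left _ _
      _ ≤ E * max (a / b) (b / a) := le_mul_of_one_le_left hmax hE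

/-- The moment inequalities of `k ↦ ∫ xᵏ w x dμ` for a weight `w ≥ 0` on `[0, ε]`. -/
structure IsClusterMoments (ε : ℝ) (m : ℕ → ℝ) : Prop where
  nonneg : ∀ k, 0 ≤ m k
  succ_le : ∀ k, m (k + 1) ≤ ε * m k
  sq_le : m 1 ^ 2 ≤ m 0 * m 2
  cov_le : 0 < m 0 → m 0 * m 3 - m 1 * m 2 ≤ 2 * ε * (m 0 * m 2 - m 1 ^ 2)

def nextMoments (α : ℝ) (m : ℕ → ℝ) (k : ℕ) : ℝ :=
  α ^ 2 * m (k + 2) - 2 * α * m (k + 1) + m k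

noncomputable def lyapunov (C : ℝ) (m : ℕ → ℝ) (t : ℝ) : ℝ :=
  max (m 0 / t) (t / m 0) * exp (C * (m 1 / m 0))

lemma nextMoments_zero_mul_sub {m : ℕ → ℝ} {t α : ℝ} (hα : α * (m 1 + t) = m 0 + t) :
    nextMoments α m 0 * m 0 - (1 - α) ^ 2 * t * t = α ^ 2 * (m 0 * m 2 - m 1 ^ 2) := by
  simp only [nextMoments]
  linear_combination (α * m 1 - m 0 + (1 - α) * t) * hα

namespace IsClusterMoments

section Step

variable {ε b t α : ℝ} {m : ℕ → ℝ} (hm : IsClusterMoments ε m)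
include hm

lemma one_lt_rate (hε : ε < 1) (hm₀ : 0 < m 0) (ht : 0 < t)
    (hα : α * (m 1 + t) = m 0 + t) : 1 < α := by
  have := hm.succ_le 0
  by_contra! h
  nlinarith [mul_le_mul_of_nonneg_right h (add_nonneg (hm.nonneg 1) ht.le)]

lemma two_mul_mul_rate_le_one (hε : 0 ≤ ε) (hb : 2 * ε * (1 + b) ≤ 1)
    (ht : 0 < t) (hmt : m 0 ≤ b * t) (hα : α * (m 1 + t) = m 0 + t) : 2 * ε * α ≤ 1 := by
  have := hm.nonneg 1
  by_contra! h
  nlinarith [mul_le_mul_of_nonneg_left hmt hε]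

lemma rate_mul_le (hε : ε < 1) (ht : 0 < t) (hmt : m 0 ≤ b * t)
    (hα : α * (m 1 + t) = m 0 + t) : α * m 0 ≤ (1 + b) / (1 - ε) * ((α - 1) * t) := by
  have hd : 0 < m 1 + t := by linarith [hm.nonneg 1]
  have key : (m 0 + t) * ((1 - ε) * m 0) ≤ (1 + b) * t * (m 0 - m 1) :=
    mul_le_mul (by linarith) (by linarith [hm.succ_le 0])
      (mul_nonneg (by linarith) (hm.nonneg 0)) (by nlinarith [hm.nonneg 0])
  rw [div_mul_eq_mul_div, le_div_iff₀ (by linarith)]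
  refine le_of_mul_le_mul_right ?_ hd
  linear_combination key + ((1 - ε) * m 0 - (1 + b) * t) * hα

lemma nextMoments_zero_le (hα : 0 ≤ α) (hrate : 2 * ε * α ≤ 1) :
    nextMoments α m 0 ≤ m 0 := by
  have hm₁ := hm.nonneg 1
  have h₂ : α * m 2 ≤ α * (ε * m 1) := mul_le_mul_of_nonneg_left (hm.succ_le 1) hα
  have h₁ : α * (ε * m 1) ≤ m 1 / 2 := by nlinarith
  have : α * (α * m 2 - 2 * m 1) ≤ 0 := mul_nonpos_of_nonneg_of_nonpos hα (by linarith)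
  simp only [nextMoments]
  linarith

lemma variance_le_nextMoments (hm₀ : 0 < m 0) (hα : 1 ≤ α) (hrate : 2 * ε * α ≤ 1) :
    m 0 * m 2 - m 1 ^ 2 ≤ m 1 * nextMoments α m 0 - m 0 * nextMoments α m 1 := by
  have hD : 0 ≤ m 0 * m 2 - m 1 ^ 2 := sub_nonneg.2 hm.sq_le
  have hcov : α ^ 2 * (m 0 * m 3 - m 1 * m 2) ≤ α * (m 0 * m 2 - m 1 ^ 2) := by
    calc α ^ 2 * (m 0 * m 3 - m 1 * m 2)
        ≤ α ^ 2 * (2 * ε * (m 0 * m 2 - m 1 ^ 2)) :=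
          mul_le_mul_of_nonneg_left (hm.cov_le hm₀) (sq_nonneg α)
      _ = (2 * ε * α) * (α * (m 0 * m 2 - m 1 ^ 2)) := by ring
      _ ≤ α * (m 0 * m 2 - m 1 ^ 2) :=
          mul_le_of_le_one_left (mul_nonneg (by linarith) hD) hrate
  have : m 1 * nextMoments α m 0 - m 0 * nextMoments α m 1
      = 2 * α * (m 0 * m 2 - m 1 ^ 2) - α ^ 2 * (m 0 * m 3 - m 1 * m 2) := by
    simp only [nextMoments]; ring
  nlinarith

lemma variance_div_le_rayleigh_sub (hm₀ : 0 < m 0) (hα : 1 ≤ α) (hrate : 2 * ε * α ≤ 1)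
    (hpos : 0 < nextMoments α m 0) :
    (m 0 * m 2 - m 1 ^ 2) / m 0 ^ 2 ≤ m 1 / m 0 - nextMoments α m 1 / nextMoments α m 0 := by
  have hD : 0 ≤ m 0 * m 2 - m 1 ^ 2 := sub_nonneg.2 hm.sq_le
  rw [div_sub_div _ _ hm₀.ne' hpos.ne']
  calc (m 0 * m 2 - m 1 ^ 2) / m 0 ^ 2
      ≤ (m 0 * m 2 - m 1 ^ 2) / (m 0 * nextMoments α m 0) := by
        refine div_le_div_of_nonneg_left hD (by positivity) ?_
        rw [sq]
        exact mul_le_mul_of_nonneg_left (hm.nextMoments_zero_le (by linarith) hrate) hm₀.le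
    _ ≤ _ := div_le_div_of_nonneg_right (hm.variance_le_nextMoments hm₀ hα hrate)
        (by positivity)

theorem lyapunov_nextMoments_le (hε₀ : 0 ≤ ε) (hε : ε < 1) (hb : 2 * ε * (1 + b) ≤ 1)
    (hm₀ : 0 < m 0) (ht : 0 < t) (hmt : m 0 ≤ b * t) (hα : α * (m 1 + t) = m 0 + t) :
    0 < nextMoments α m 0 ∧ 0 < (1 - α) ^ 2 * t ∧
      lyapunov (((1 + b) / (1 - ε)) ^ 2) (nextMoments α m) ((1 - α) ^ 2 * t)
        ≤ lyapunov (((1 + b) / (1 - ε)) ^ 2) m t := by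
  set C := ((1 + b) / (1 - ε)) ^ 2
  set m' := nextMoments α m
  set t' := (1 - α) ^ 2 * t
  set D := m 0 * m 2 - m 1 ^ 2
  set Δ := m 1 / m 0 - m' 1 / m' 0
  have hα₁ : 1 < α := hm.one_lt_rate hε hm₀ ht hα
  have hrate : 2 * ε * α ≤ 1 := hm.two_mul_mul_rate_le_one hε₀ hb ht hmt hα
  have hD : 0 ≤ D := sub_nonneg.2 hm.sq_le
  have hid : m' 0 * m 0 = t' * t + α ^ 2 * D := by
    linear_combination nextMoments_zero_mul_sub hα
  have ht' : 0 < t' := mul_pos (by nlinarith) ht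
  have hm'₀ : 0 < m' 0 := by
    have : 0 < m' 0 * m 0 := by rw [hid]; positivity
    exact pos_of_mul_pos_left this hm₀.le
  have hΔ : D ≤ m 0 ^ 2 * Δ :=
    (div_le_iff₀' (by positivity)).1 (hm.variance_div_le_rayleigh_sub hm₀ hα₁.le hrate hm'₀)
  have hΔ₀ : 0 ≤ Δ := nonneg_of_mul_nonneg_right (hD.trans hΔ) (by positivity)
  have hsq : (α * m 0) ^ 2 ≤ C * (t' * t) := by
    calc (α * m 0) ^ 2 ≤ ((1 + b) / (1 - ε) * ((α - 1) * t)) ^ 2 :=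
          pow_le_pow_left₀ (by positivity) (hm.rate_mul_le hε ht hmt hα) 2
      _ = C * (t' * t) := by ring
  have hup : m' 0 * m 0 ≤ exp (C * Δ) * (t' * t) := by
    calc m' 0 * m 0 = t' * t + α ^ 2 * D := hid
      _ ≤ t' * t + α ^ 2 * (m 0 ^ 2 * Δ) := by gcongr
      _ = t' * t + (α * m 0) ^ 2 * Δ := by ring
      _ ≤ t' * t + C * (t' * t) * Δ := by gcongr
      _ = (C * Δ + 1) * (t' * t) := by ring
      _ ≤ exp (C * Δ) * (t' * t) := by gcongr; exact add_one_le_exp _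
  have hmax := max_div_le_of_mul_le hm₀ ht hm'₀ ht' (by nlinarith) hup
    (one_le_exp (by positivity))
  refine ⟨hm'₀, ht', ?_⟩
  calc lyapunov C m' t' ≤ exp (C * Δ) * max (m 0 / t) (t / m 0) * exp (C * (m' 1 / m' 0)) :=
        mul_le_mul_of_nonneg_right hmax (exp_pos _).le
    _ = lyapunov C m t := by
        rw [lyapunov, mul_comm (exp _), mul_assoc, ← exp_add]; congr 3; ring

end Step

variable {ε C t : ℝ} {m : ℕ → ℝ}

lemma max_div_le_lyapunov (hm : IsClusterMoments ε m) (hC : 0 ≤ C) (ht : 0 ≤ t) :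
    max (m 0 / t) (t / m 0) ≤ lyapunov C m t :=
  le_mul_of_one_le_right (le_max_of_le_left (div_nonneg (hm.nonneg 0) ht))
    (one_le_exp (mul_nonneg hC (div_nonneg (hm.nonneg 1) (hm.nonneg 0))))

lemma lyapunov_le (hm : IsClusterMoments ε m) (hC : 0 ≤ C) (hm₀ : 0 < m 0) (ht : 0 ≤ t) :
    lyapunov C m t ≤ exp (ε * C) * max (m 0 / t) (t / m 0) := by
  rw [lyapunov, mul_comm (exp _)]
  refine mul_le_mul_of_nonneg_left (exp_le_exp.2 ?_) (le_max_of_le_left (div_nonneg hm₀.le ht))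
  rw [mul_comm ε]
  exact mul_le_mul_of_nonneg_left ((div_le_iff₀ hm₀).2 (hm.succ_le 0)) hC

end IsClusterMoments

theorem two_mul_mul_rate_le_one_of_iterate {ε b : ℝ} {m : ℕ → ℕ → ℝ} {t A : ℕ → ℝ}
    (hε₀ : 0 ≤ ε) (hε : ε < 1) (hb : 2 * ε * (1 + b) ≤ 1)
    (hm : ∀ n, IsClusterMoments ε (m n)) (hm₀ : 0 < m 0 0) (ht₀ : 0 < t 0)
    (hbal : exp (ε * ((1 + b) / (1 - ε)) ^ 2) * max (m 0 0 / t 0) (t 0 / m 0 0) ≤ b)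
    (hA : ∀ n, A n = (m n 0 + t n) / (m n 1 + t n))
    (hmn : ∀ n, m (n + 1) = nextMoments (A n) (m n))
    (htn : ∀ n, t (n + 1) = (1 - A n) ^ 2 * t n) (n : ℕ) :
    2 * ε * A n ≤ 1 := by
  set C := ((1 + b) / (1 - ε)) ^ 2
  have hC : 0 ≤ C := sq_nonneg _
  have hstep : ∀ n, 0 < t n → lyapunov C (m n) (t n) ≤ lyapunov C (m 0) (t 0) →
      m n 0 ≤ b * t n ∧ A n * (m n 1 + t n) = m n 0 + t n := fun n ht hV => by
    refine ⟨?_, ?_⟩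
    · rw [← div_le_iff₀ ht]
      calc m n 0 / t n ≤ lyapunov C (m n) (t n) :=
            (le_max_left _ _).trans ((hm n).max_div_le_lyapunov hC ht.le)
        _ ≤ exp (ε * C) * max (m 0 0 / t 0) (t 0 / m 0 0) :=
            hV.trans ((hm 0).lyapunov_le hC hm₀ ht₀.le)
        _ ≤ b := hbal
    · rw [hA n, div_mul_cancel₀ _ (by linarith [(hm n).nonneg 1])]
  have hinv : ∀ n, 0 < m n 0 ∧ 0 < t n ∧ lyapunov C (m n) (t n) ≤ lyapunov C (m 0) (t 0) := by
    intro n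
    induction n with
    | zero => exact ⟨hm₀, ht₀, le_rfl⟩
    | succ n ih =>
      obtain ⟨hmn₀, htn₀, hV⟩ := ih
      obtain ⟨hmt, hαn⟩ := hstep n htn₀ hV
      obtain ⟨h₀, ht, hV'⟩ := (hm n).lyapunov_nextMoments_le hε₀ hε hb hmn₀ htn₀ hmt hαn
      rw [hmn, htn]
      exact ⟨h₀, ht, hV'.trans hV⟩
  obtain ⟨-, htn₀, hV⟩ := hinv n
  obtain ⟨hmt, hαn⟩ := hstep n htn₀ hV
  exact (hm n).two_mul_mul_rate_le_one hε₀ hb htn₀ hmt hαn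

section WeightedMoment

noncomputable def weightedMoment (μ : Measure ℝ) (w : ℝ → ℝ) (k : ℕ) : ℝ :=
  ∫ x, x ^ k * w x ∂μ

variable {μ : Measure ℝ} {w : ℝ → ℝ}

lemma integral_cubic_mul_eq (hint : ∀ k, Integrable (fun x => x ^ k * w x) μ)
    (a b c d : ℝ) (k : ℕ) :
    ∫ x, (a * x ^ 3 + b * x ^ 2 + c * x + d) * (x ^ k * w x) ∂μ
      = a * weightedMoment μ w (k + 3) + b * weightedMoment μ w (k + 2)
        + c * weightedMoment μ w (k + 1) + d * weightedMoment μ w k := by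
  have e : (fun x => (a * x ^ 3 + b * x ^ 2 + c * x + d) * (x ^ k * w x)) = fun x =>
      a * (x ^ (k + 3) * w x) + b * (x ^ (k + 2) * w x) + c * (x ^ (k + 1) * w x)
        + d * (x ^ k * w x) := by
    ext x; ring
  rw [e, integral_add (by fun_prop) (by fun_prop), integral_add (by fun_prop) (by fun_prop),
    integral_add (by fun_prop) (by fun_prop)]
  simp only [integral_const_mul, weightedMoment]

lemma weightedMoment_one_sub_mul_sq (hint : ∀ k, Integrable (fun x => x ^ k * w x) μ) (α : ℝ) :
    weightedMoment μ (fun x => (1 - α * x) ^ 2 * w x) = nextMoments α (weightedMoment μ w) := by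
  ext k
  calc weightedMoment μ (fun x => (1 - α * x) ^ 2 * w x) k
      = ∫ x, (0 * x ^ 3 + α ^ 2 * x ^ 2 + -(2 * α) * x + 1) * (x ^ k * w x) ∂μ := by
        simp only [weightedMoment]; congr 1 with x; ring
    _ = nextMoments α (weightedMoment μ w) k := by
        rw [integral_cubic_mul_eq hint, nextMoments]; ring

lemma weightedMoment_nonneg (hμ : ∀ᵐ x ∂μ, 0 ≤ x) (hw : ∀ᵐ x ∂μ, 0 ≤ w x) (k : ℕ) :
    0 ≤ weightedMoment μ w k := by
  refine integral_nonneg_of_ae ?_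
  filter_upwards [hμ, hw] with x hx hwx using mul_nonneg (pow_nonneg hx k) hwx

lemma weightedMoment_one_sq_le (hw : ∀ᵐ x ∂μ, 0 ≤ w x)
    (hint : ∀ k, Integrable (fun x => x ^ k * w x) μ) :
    weightedMoment μ w 1 ^ 2 ≤ weightedMoment μ w 0 * weightedMoment μ w 2 := by
  have := discrim_le_zero (a := weightedMoment μ w 2) (b := -2 * weightedMoment μ w 1)
    (c := weightedMoment μ w 0) fun s => by
      have h : 0 ≤ ∫ x, (0 * x ^ 3 + s ^ 2 * x ^ 2 + -2 * s * x + 1) * (x ^ 0 * w x) ∂μ := by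
        refine integral_nonneg_of_ae ?_
        filter_upwards [hw] with x hwx
        rw [pow_zero, one_mul,
          show 0 * x ^ 3 + s ^ 2 * x ^ 2 + -2 * s * x + 1 = (s * x - 1) ^ 2 by ring]
        positivity
      rw [integral_cubic_mul_eq hint] at h
      linarith
  rw [discrim] at this
  linarith

variable {ε : ℝ}

lemma weightedMoment_succ_le (hμ : ∀ᵐ x ∂μ, x ∈ Icc 0 ε) (hw : ∀ᵐ x ∂μ, 0 ≤ w x)
    (hint : ∀ k, Integrable (fun x => x ^ k * w x) μ) (k : ℕ) :
    weightedMoment μ w (k + 1) ≤ ε * weightedMoment μ w k := by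
  simp only [weightedMoment]
  rw [← integral_const_mul]
  refine integral_mono_ae (hint (k + 1)) ((hint k).const_mul ε) ?_
  filter_upwards [hμ, hw] with x hx hwx
  rw [pow_succ', mul_assoc]
  exact mul_le_mul_of_nonneg_right hx.2 (mul_nonneg (pow_nonneg hx.1 k) hwx)

lemma weightedMoment_cov_le (hμ : ∀ᵐ x ∂μ, x ∈ Icc 0 ε) (hw : ∀ᵐ x ∂μ, 0 ≤ w x)
    (hint : ∀ k, Integrable (fun x => x ^ k * w x) μ) (hM₀ : 0 < weightedMoment μ w 0) :
    weightedMoment μ w 0 * weightedMoment μ w 3 - weightedMoment μ w 1 * weightedMoment μ w 2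
      ≤ 2 * ε * (weightedMoment μ w 0 * weightedMoment μ w 2 - weightedMoment μ w 1 ^ 2) := by
  set M := weightedMoment μ w
  have hM₁ : M 1 ≤ ε * M 0 := weightedMoment_succ_le hμ hw hint 0
  -- `(x - x̄)² (x + x̄) ≤ 2ε (x - x̄)²` with `x̄ = M₁ / M₀`, cleared of denominators
  have h : 0 ≤ ∫ x, (-M 0 ^ 3 * x ^ 3 + M 0 ^ 2 * (2 * ε * M 0 + M 1) * x ^ 2
      + (M 0 * M 1 ^ 2 - 4 * ε * M 0 ^ 2 * M 1) * x + (2 * ε * M 0 - M 1) * M 1 ^ 2)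
        * (x ^ 0 * w x) ∂μ := by
    refine integral_nonneg_of_ae ?_
    filter_upwards [hμ, hw] with x hx hwx
    have : 0 ≤ 2 * ε * M 0 - M 1 - M 0 * x := by nlinarith [hx.2]
    have e : -M 0 ^ 3 * x ^ 3 + M 0 ^ 2 * (2 * ε * M 0 + M 1) * x ^ 2
        + (M 0 * M 1 ^ 2 - 4 * ε * M 0 ^ 2 * M 1) * x + (2 * ε * M 0 - M 1) * M 1 ^ 2
        = (2 * ε * M 0 - M 1 - M 0 * x) * (M 0 * x - M 1) ^ 2 := by ring
    rw [e, pow_zero, one_mul]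
    positivity
  rw [integral_cubic_mul_eq hint] at h
  have : 0 ≤ M 0 ^ 2 * (2 * ε * (M 0 * M 2 - M 1 ^ 2) - (M 0 * M 3 - M 1 * M 2)) := by
    linear_combination h
  exact sub_nonneg.1 (nonneg_of_mul_nonneg_right this (by positivity))

theorem weightedMoment_isClusterMoments (hμ : ∀ᵐ x ∂μ, x ∈ Icc 0 ε) (hw : ∀ᵐ x ∂μ, 0 ≤ w x)
    (hint : ∀ k, Integrable (fun x => x ^ k * w x) μ) :
    IsClusterMoments ε (weightedMoment μ w) where
  nonneg := weightedMoment_nonneg (by filter_upwards [hμ] with x hx using hx.1) hw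
  succ_le := weightedMoment_succ_le hμ hw hint
  sq_le := weightedMoment_one_sq_le hw hint
  cov_le := weightedMoment_cov_le hμ hw hint

end WeightedMoment

lemma integral_eq_setIntegral_add_measureReal_singleton {ρ : Measure ℝ} [IsFiniteMeasure ρ]
    {s : Set ℝ} {a : ℝ} {f : ℝ → ℝ} (ha : a ∉ s) (hρ : ρ (s ∪ {a})ᶜ = 0)
    (hf : IntegrableOn f s ρ) :
    ∫ x, f x ∂ρ = ∫ x in s, f x ∂ρ + ρ.real {a} * f a := by
  nth_rw 1 [← Measure.restrict_eq_self_of_ae_mem (ae_iff.2 hρ)]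
  rw [setIntegral_union (disjoint_singleton_right.2 ha) (measurableSet_singleton a) hf
      integrableOn_singleton, integral_singleton, smul_eq_mul]

lemma integral_pow_succ_mul_eq {ρ : Measure ℝ} [IsFiniteMeasure ρ] {ε : ℝ} (hε : ε < 1)
    (hρ : ρ (Icc 0 ε ∪ {1})ᶜ = 0) {g : ℝ → ℝ} (hg : Continuous g) (k : ℕ) :
    ∫ x, x ^ (k + 1) * g x ∂ρ
      = weightedMoment (ρ.restrict (Icc 0 ε)) (fun x => x * g x) k + ρ.real {1} * g 1 := by
  rw [integral_eq_setIntegral_add_measureReal_singleton (by simp [hε.not_ge]) hρ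
    (Continuous.integrableOn_Icc (by fun_prop))]
  simp [weightedMoment, pow_succ, mul_assoc]

lemma withDensity_ofReal_singleton (ρ : Measure ℝ) (a : ℝ) :
    ρ.withDensity (fun l => ENNReal.ofReal l) {a} = ENNReal.ofReal a * ρ {a} := by
  rw [withDensity_apply _ (measurableSet_singleton a), Measure.restrict_singleton,
    lintegral_smul_measure, lintegral_dirac, smul_eq_mul, mul_comm]

lemma toReal_withDensity_ofReal_Ioc (ρ : Measure ℝ) [IsFiniteMeasure ρ] (ε : ℝ) :
    (ρ.withDensity (fun l => ENNReal.ofReal l) (Ioc 0 ε)).toReal = ∫ x in Icc 0 ε, x ∂ρ := by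
  set σ := ρ.withDensity (fun l => ENNReal.ofReal l)
  have hIcc : σ (Ioc 0 ε) = σ (Icc 0 ε) := by
    refine le_antisymm (measure_mono Ioc_subset_Icc_self) ?_
    calc σ (Icc 0 ε) ≤ σ ({0} ∪ Ioc 0 ε) := measure_mono fun x hx => by
          rcases hx.1.eq_or_lt with h | h
          · exact Or.inl h.symm
          · exact Or.inr ⟨h, hx.2⟩
      _ ≤ σ {0} + σ (Ioc 0 ε) := measure_union_le _ _
      _ = σ (Ioc 0 ε) := by
          rw [withDensity_ofReal_singleton, ENNReal.ofReal_zero, zero_mul, zero_add]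
  have hnn : 0 ≤ᵐ[ρ.restrict (Icc 0 ε)] fun x => x :=
    (ae_restrict_iff' measurableSet_Icc).2 (ae_of_all _ fun x hx => hx.1)
  rw [hIcc, withDensity_apply _ measurableSet_Icc,
    ← ofReal_integral_eq_lintegral_ofReal continuous_id'.integrableOn_Icc hnn,
    ENNReal.toReal_ofReal (setIntegral_nonneg measurableSet_Icc fun x hx => hx.1)]

lemma continuous_of_residual_rec {q : ℕ → ℝ → ℝ} {A : ℕ → ℝ} (hq0 : ∀ l, q 0 l = 1)
    (hqrec : ∀ n l, q (n + 1) l = (1 - A n * l) * q n l) (n : ℕ) : Continuous (q n) := by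
  induction n with
  | zero => rw [funext hq0]; exact continuous_const
  | succ n ih => rw [funext (hqrec n)]; fun_prop

theorem steepest_descent_two_cluster_rate_bound_general
    (ε : ℝ) (hε0 : 0 < ε) (hε1 : ε < 1)
    (ρ : Measure ℝ) [IsFiniteMeasure ρ]
    (hsupp : ρ (Set.Icc (0:ℝ) ε ∪ {(1:ℝ)})ᶜ = 0)
    (σ : Measure ℝ)
    (hσ : σ = ρ.withDensity (fun l => ENNReal.ofReal l))
    (hσpos : 0 < (σ (Set.Ioc 0 ε)).toReal)
    (hσ1 : 0 < (σ {(1:ℝ)}).toReal)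
    (b : ℝ)
    (hb1 : Real.exp (2 * ε * (1 + b) ^ 2 / (1 - ε) ^ 2) *
        max ((σ (Set.Ioc 0 ε)).toReal / (σ {(1:ℝ)}).toReal)
            ((σ {(1:ℝ)}).toReal / (σ (Set.Ioc 0 ε)).toReal) ≤ b)
    (hb2 : b ≤ 1 / (2 * ε) - 1)
    (q : ℕ → ℝ → ℝ) (A : ℕ → ℝ)
    (hq0 : ∀ l, q 0 l = 1)
    (hA : ∀ n, A n = (∫ l, l * (q n l) ^ 2 ∂ρ) / ∫ l, l ^ 2 * (q n l) ^ 2 ∂ρ)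
    (hqrec : ∀ n l, q (n + 1) l = (1 - A n * l) * q n l) :
    ∀ n : ℕ, A n ≤ 1 / (2 * ε) := by
  have hq := continuous_of_residual_rec hq0 hqrec
  set m : ℕ → ℕ → ℝ := fun n => weightedMoment (ρ.restrict (Icc 0 ε)) fun x => x * q n x ^ 2
  set t : ℕ → ℝ := fun n => ρ.real {1} * q n 1 ^ 2
  have hint : ∀ n k, Integrable (fun x => x ^ k * (x * q n x ^ 2)) (ρ.restrict (Icc 0 ε)) :=
    fun n k => Continuous.integrableOn_Icc (by fun_prop)
  have hw : ∀ n, ∀ᵐ x ∂ρ.restrict (Icc 0 ε), 0 ≤ x * q n x ^ 2 := fun n =>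
    (ae_restrict_iff' measurableSet_Icc).2 (ae_of_all _ fun x hx => by have := hx.1; positivity)
  have hsplit : ∀ n k, ∫ x, x ^ (k + 1) * q n x ^ 2 ∂ρ = m n k + t n :=
    fun n => integral_pow_succ_mul_eq hε1 hsupp (by fun_prop)
  have hσ₀ : (σ (Ioc 0 ε)).toReal = m 0 0 := by
    rw [hσ, toReal_withDensity_ofReal_Ioc]; simp [m, weightedMoment, hq0]
  have hσ₁ : (σ {1}).toReal = t 0 := by
    rw [hσ, withDensity_ofReal_singleton]; simp [t, hq0, measureReal_def]
  intro n
  rw [le_div_iff₀ (by positivity), mul_comm]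
  refine two_mul_mul_rate_le_one_of_iterate (b := b) (m := m) (t := t) hε0.le hε1 ?_
    (fun n => weightedMoment_isClusterMoments (ae_restrict_mem measurableSet_Icc) (hw n) (hint n))
    (hσ₀ ▸ hσpos) (hσ₁ ▸ hσ1) ?_ (fun n => ?_) (fun n => ?_) (fun n => ?_) n
  · linarith [(le_div_iff₀' (by positivity)).1 (show 1 + b ≤ 1 / (2 * ε) by linarith)]
  · rw [← hσ₀, ← hσ₁, div_pow]
    refine le_trans (mul_le_mul_of_nonneg_right (exp_le_exp.2 ?_)
      (le_max_of_le_left (div_pos hσpos hσ1).le)) hb1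
    rw [mul_div_assoc]
    nlinarith [show 0 ≤ ε * ((1 + b) ^ 2 / (1 - ε) ^ 2) by positivity]
  · rw [hA n, ← hsplit n 0, ← hsplit n 1]; norm_num
  · rw [← weightedMoment_one_sub_mul_sq (hint n)]
    simp only [m, hqrec, mul_pow]
    congr 1 with x; ring
  · simp only [t, hqrec]; ring

/-- Steepest Descent on a spectral measure concentrated on `[0,ε] ∪ {1}`: under the
balance condition on `σ(dλ) = λρ(dλ)` involving a constant `b`, all SD learning rates
are bounded by `1/(2ε)`. -/
theorem steepest_descent_two_cluster_rate_bound
    (ε : ℝ) (hε0 : 0 < ε) (hε1 : ε < 1)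
    (ρ : Measure ℝ) [IsFiniteMeasure ρ]
    (hsupp : ρ (Set.Icc (0:ℝ) ε ∪ {(1:ℝ)})ᶜ = 0)
    (h0 : ρ {(0:ℝ)} = 0)
    (σ : Measure ℝ)
    (hσ : σ = ρ.withDensity (fun l => ENNReal.ofReal l))
    (hσpos : 0 < (σ (Set.Ioc 0 ε)).toReal)
    (hσ1 : 0 < (σ {(1:ℝ)}).toReal)
    (b : ℝ)
    (hb1 : Real.exp (2 * ε * (1 + b) ^ 2 / (1 - ε) ^ 2) *
        max ((σ (Set.Ioc 0 ε)).toReal / (σ {(1:ℝ)}).toReal)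
            ((σ {(1:ℝ)}).toReal / (σ (Set.Ioc 0 ε)).toReal) ≤ b)
    (hb2 : b ≤ 1 / (2 * ε) - 1)
    (q : ℕ → ℝ → ℝ) (A : ℕ → ℝ)
    (hq0 : ∀ l, q 0 l = 1)
    (hA : ∀ n, A n = (∫ l, l * (q n l) ^ 2 ∂ρ) / ∫ l, l ^ 2 * (q n l) ^ 2 ∂ρ)
    (hqrec : ∀ n l, q (n + 1) l = (1 - A n * l) * q n l) :
    ∀ n : ℕ, A n ≤ 1 / (2 * ε) :=
  steepest_descent_two_cluster_rate_bound_general ε hε0 hε1 ρ hsupp σ hσ hσpos hσ1 b hb1 hb2 q A hq0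
    hA hqrec
end

section
/- Let a > 0, let n ≥ 1, and let x_1 ≥ x_2 ≥ … ≥ x_n be nonzero real numbers such that |∏_{i=1}^n (1 − x/x_i)| ≤ 1 for every x ∈ [0,a]. Then for every m ∈ {0,1,…,n} and every x ∈ [0,a], |∏_{i=1}^m (1 − x/x_i)| ≤ 1. -/
/-!
Fix `t ∈ [0, a]`. If every factor `1 - t/x_i` with `i < m` has modulus at most `1`, so has
their product. Otherwise some `|1 - t/x_{i₀}| > 1` with `i₀ < m`, which for `t ≥ 0` means
`x_{i₀} < 0` or `0 < x_{i₀} < t/2`; both conditions persist for the smaller roots `x_j`, `j ≥ i₀`,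
so all factors with `j ≥ m` have modulus at least `1`, and `|p_{n,m}(t)| ≤ |p_n(t)| ≤ 1`.
-/

open Finset

lemma one_le_abs_one_sub_div_of_le {K : Type*} [Field K] [LinearOrder K] [IsStrictOrderedRing K]
    {t x y : K} (ht : 0 ≤ t) (hyx : y ≤ x)
    (hx : 1 < |1 - t / x|) : 1 ≤ |1 - t / y| := by
  rcases le_or_gt y 0 with hy | hy
  · have : t / y ≤ 0 := div_nonpos_of_nonneg_of_nonpos ht hy
    rw [abs_of_nonneg (by linarith)]
    linarith
  · have hx0 : 0 < x := hy.trans_le hyx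
    have htx : 2 < t / x := by
      rcases lt_abs.mp hx with h | h
      · linarith [div_nonneg ht hx0.le]
      · linarith
    have hty : t / x ≤ t / y := div_le_div_of_nonneg_left ht hy hyx
    rw [abs_of_neg (by linarith)]
    linarith

lemma abs_prod_range_le_of_one_le_abs {R : Type*} [CommRing R] [LinearOrder R]
    [IsStrictOrderedRing R] {f : ℕ → R} {m n : ℕ} (hmn : m ≤ n)
    (htail : ∀ i ∈ Ico m n, 1 ≤ |f i|) :
    |∏ i ∈ range m, f i| ≤ |∏ i ∈ range n, f i| := by
  rw [← prod_range_mul_prod_Ico f hmn, abs_mul]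
  refine le_mul_of_one_le_right (abs_nonneg _) ?_
  rw [abs_prod]
  exact one_le_prod htail

theorem reduced_polynomials_bounded_general
    (a : ℝ) (n : ℕ)
    (x : ℕ → ℝ)
    (hsort : ∀ i j, i ≤ j → j < n → x j ≤ x i)
    (hbound : ∀ t ∈ Set.Icc (0:ℝ) a, |∏ i ∈ Finset.range n, (1 - t / x i)| ≤ 1) :
    ∀ m : ℕ, m ≤ n → ∀ t ∈ Set.Icc (0:ℝ) a,
      |∏ i ∈ Finset.range m, (1 - t / x i)| ≤ 1 := by
  intro m hm t ht
  by_cases hfactors : ∀ i ∈ range m, |1 - t / x i| ≤ 1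
  · rw [abs_prod]
    exact prod_le_one (fun _ _ ↦ abs_nonneg _) hfactors
  · push Not at hfactors
    obtain ⟨i₀, hi₀, hbig⟩ := hfactors
    have htail : ∀ j ∈ Ico m n, 1 ≤ |1 - t / x j| := fun j hj ↦ by
      rw [mem_range] at hi₀
      rw [mem_Ico] at hj
      exact one_le_abs_one_sub_div_of_le ht.1 (hsort i₀ j (by omega) hj.2) hbig
    exact (abs_prod_range_le_of_one_le_abs hm htail).trans (hbound t ht)

/-- Reduced residual polynomials: if `p(x) = ∏_{i=1}^n (1 - x/x_i)` with sorted nonzero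
roots `x_1 ≥ … ≥ x_n` satisfies `|p(x)| ≤ 1` on `[0,a]`, then every reduced polynomial
`p_m(x) = ∏_{i=1}^m (1 - x/x_i)` also satisfies `|p_m(x)| ≤ 1` on `[0,a]`.
(Here `x i` denotes the root `x_{i+1}`.) -/
theorem reduced_polynomials_bounded
    (a : ℝ) (ha : 0 < a) (n : ℕ) (hn : 1 ≤ n)
    (x : ℕ → ℝ)
    (hx : ∀ i, i < n → x i ≠ 0)
    (hsort : ∀ i j, i ≤ j → j < n → x j ≤ x i)
    (hbound : ∀ t ∈ Set.Icc (0:ℝ) a, |∏ i ∈ Finset.range n, (1 - t / x i)| ≤ 1) :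
    ∀ m : ℕ, m ≤ n → ∀ t ∈ Set.Icc (0:ℝ) a,
      |∏ i ∈ Finset.range m, (1 - t / x i)| ≤ 1 :=
  reduced_polynomials_bounded_general a n x hsort hbound
end

section
/- Let ν>0 and ζ>0, and set g = (1−(2+ν)ζ)/2. Define the infinite lower-bidiagonal real matrix J by J_{1,1} = 1, J_{n,n} = n^{-ν/2} for n ≥ 2, J_{n,n-1} = −(n/(n−1))^g·(n−1)^{-ν/2} for n ≥ 2, and all other entries 0, and let à = J·Jᵀ (a well-defined banded infinite matrix). Then for every n ≥ 1, the minimum over all real sequences x = (x_k)_{k≥1} with x_k = 0 for k > n of the quantity (1/2)·Σ_{k=1}^∞ ((Ãx)_k − [k=1])², where (Ãx)_k = Σ_j Ã_{k,j} x_j and [k=1] is 1 if k=1 and 0 otherwise, equals ( 2·Σ_{m=1}^{n+1} m^{(2+ν)ζ−1} )^{-1}. -/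
open Finset

/-!
With `ρ k = (k + 1)^(-g)`, the subdiagonal of `J` is exactly the one making `ρ` a left null
vector of `J`, so `⟪ρ, J Jᵀ x⟫ = 0` for every finitely supported `x`, while `⟪ρ, e₀⟫ = 1`. For `x`
supported on the first `n` coordinates the residual `J Jᵀ x - e₀` lives on the first `n + 1`, and
Cauchy–Schwarz against `ρ` bounds the loss below by `1 / (2 ∑_{k ≤ n} ρ_k²)`. Since `J` is
bidiagonal with nonzero diagonal, `J Jᵀ` maps these `x` onto all of `ρ^⊥` inside the first
`n + 1` coordinates (both triangular solves are explicit), so the equality case `-ρ / ∑ ρ_k²` of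
Cauchy–Schwarz is attained.
-/

/-- The lower-bidiagonal matrix with diagonal `d` whose subdiagonal is chosen so that `ρ` spans
its left kernel. -/
noncomputable def lowerBidiag (d ρ : ℕ → ℝ) (i j : ℕ) : ℝ :=
  if j = i then d i else if j + 1 = i then -(d j * ρ j / ρ i) else 0

/-- `(J Jᵀ) x`. -/
noncomputable def gramMulVec (J : ℕ → ℕ → ℝ) (x : ℕ → ℝ) (k : ℕ) : ℝ :=
  ∑' j, (∑' m, J k m * J j m) * x j

noncomputable def gramResidualLoss (J : ℕ → ℕ → ℝ) (x : ℕ → ℝ) : ℝ :=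
  (1/2) * ∑' k, (gramMulVec J x k - if k = 0 then (1:ℝ) else 0) ^ 2

theorem gramMulVec_eq_sum_range {J : ℕ → ℕ → ℝ} (hJ : ∀ i j, i < j → J i j = 0) {n : ℕ}
    {x : ℕ → ℝ} (hx : ∀ k, n ≤ k → x k = 0) (k : ℕ) :
    gramMulVec J x k = ∑ m ∈ range n, J k m * ∑' j, J j m * x j := by
  have hcol : ∀ m, ∑' j, J j m * x j = ∑ j ∈ range n, J j m * x j := fun m =>
    tsum_eq_sum (s := range n) fun j hj => by rw [hx j (by simpa using hj), mul_zero]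
  have hrow : ∀ j ∈ range n, ∑' m, J k m * J j m = ∑ m ∈ range n, J k m * J j m :=
    fun j hj => tsum_eq_sum (s := range n) fun m hm => by
      rw [hJ j m (by simp only [mem_range, not_lt] at hj hm; omega), mul_zero]
  calc gramMulVec J x k = ∑ j ∈ range n, (∑ m ∈ range n, J k m * J j m) * x j := by
        rw [gramMulVec, tsum_eq_sum (s := range n) fun j hj => by
          rw [hx j (by simpa using hj), mul_zero]]
        exact sum_congr rfl fun j hj => by rw [hrow j hj]
    _ = ∑ m ∈ range n, J k m * ∑ j ∈ range n, J j m * x j := by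
        simp only [sum_mul, mul_sum, mul_assoc]
        exact sum_comm
    _ = ∑ m ∈ range n, J k m * ∑' j, J j m * x j := by simp only [hcol]

section LowerBidiag

variable {d ρ : ℕ → ℝ} {n : ℕ} {x : ℕ → ℝ}

theorem lowerBidiag_eq_zero_of_lt {i j : ℕ} (h : i < j) : lowerBidiag d ρ i j = 0 := by
  rw [lowerBidiag, if_neg (by omega), if_neg (by omega)]

theorem tsum_lowerBidiag_mul (m : ℕ) :
    ∑' j, lowerBidiag d ρ j m * x j = d m * x m - d m * ρ m / ρ (m + 1) * x (m + 1) := by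
  rw [tsum_eq_sum (s := {m, m + 1}) fun j hj => ?_, sum_pair (by omega)]
  · rw [lowerBidiag, lowerBidiag, if_pos rfl, if_neg (by omega), if_pos rfl]
    ring
  · simp only [mem_insert, mem_singleton, not_or] at hj
    rw [lowerBidiag, if_neg (Ne.symm hj.1), if_neg (Ne.symm hj.2), zero_mul]

theorem sum_range_mul_lowerBidiag (hρ : ∀ k, ρ k ≠ 0) (K m : ℕ) :
    ∑ k ∈ range (K + 1), ρ k * lowerBidiag d ρ k m = if m = K then d K * ρ K else 0 := by
  induction K with
  | zero =>
    rw [sum_range_one, lowerBidiag, if_neg m.succ_ne_zero]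
    split_ifs <;> ring
  | succ K ih =>
    rw [sum_range_succ, ih, lowerBidiag]
    split_ifs <;> first | omega | (subst_vars; field_simp [hρ]; ring)

theorem sum_range_mul_gramMulVec_lowerBidiag (hρ : ∀ k, ρ k ≠ 0) (hx : ∀ k, n ≤ k → x k = 0)
    (K : ℕ) :
    ∑ k ∈ range (K + 1), ρ k * gramMulVec (lowerBidiag d ρ) x k =
      if K < n then d K * ρ K * ∑' j, lowerBidiag d ρ j K * x j else 0 := by
  simp_rw [gramMulVec_eq_sum_range (fun _ _ => lowerBidiag_eq_zero_of_lt) hx, mul_sum]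
  rw [sum_comm]
  simp_rw [← mul_assoc, ← sum_mul, sum_range_mul_lowerBidiag hρ, ite_mul, zero_mul]
  simp only [sum_ite_eq', mem_range]

theorem gramMulVec_lowerBidiag_eq_zero (hx : ∀ k, n ≤ k → x k = 0) {k : ℕ} (hk : n < k) :
    gramMulVec (lowerBidiag d ρ) x k = 0 := by
  rw [gramMulVec_eq_sum_range (fun _ _ => lowerBidiag_eq_zero_of_lt) hx]
  refine sum_eq_zero fun m hm => ?_
  rw [mem_range] at hm
  rw [lowerBidiag, if_neg (by omega), if_neg (by omega), zero_mul]

theorem exists_tsum_lowerBidiag_mul_eq (hd : ∀ k, d k ≠ 0) (hρ : ∀ k, ρ k ≠ 0) (n : ℕ)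
    (y : ℕ → ℝ) :
    ∃ x : ℕ → ℝ, (∀ k, n ≤ k → x k = 0) ∧ ∀ m < n, ∑' j, lowerBidiag d ρ j m * x j = y m := by
  -- for `x = ρ v` the left-hand side is `d m ρ m (v m - v (m + 1))`
  refine ⟨fun k => ρ k * ∑ i ∈ Ico k n, y i / (d i * ρ i),
    fun k hk => by simp [Ico_eq_empty_of_le hk], fun m hm => ?_⟩
  rw [tsum_lowerBidiag_mul, sum_eq_sum_Ico_succ_bot hm]
  field_simp [hd m, hρ m, hρ (m + 1)]
  ring

theorem exists_gramMulVec_lowerBidiag_eq (hd : ∀ k, d k ≠ 0) (hρ : ∀ k, ρ k ≠ 0) {r : ℕ → ℝ}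
    (hr : ∑ k ∈ range (n + 1), ρ k * r k = 0) (hrn : ∀ k, n < k → r k = 0) :
    ∃ x : ℕ → ℝ, (∀ k, n ≤ k → x k = 0) ∧ gramMulVec (lowerBidiag d ρ) x = r := by
  obtain ⟨x, hx, hy⟩ := exists_tsum_lowerBidiag_mul_eq hd hρ n
    fun m => (∑ k ∈ range (m + 1), ρ k * r k) / (d m * ρ m)
  refine ⟨x, hx, ?_⟩
  -- a sequence is determined by its `ρ`-weighted prefix sums
  have hprefix : ∀ K, ∑ k ∈ range (K + 1), ρ k * gramMulVec (lowerBidiag d ρ) x k =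
      ∑ k ∈ range (K + 1), ρ k * r k := by
    intro K
    rw [sum_range_mul_gramMulVec_lowerBidiag hρ hx]
    split_ifs with hK
    · rw [hy K hK]
      field_simp [hd K, hρ K]
    · rw [← sum_range_add_sum_Ico _ (show n + 1 ≤ K + 1 by omega), hr, zero_add]
      exact (sum_eq_zero fun k hk => by rw [hrn k (by simp at hk; omega), mul_zero]).symm
  funext k
  apply mul_left_cancel₀ (hρ k)
  cases k with
  | zero => simpa using hprefix 0
  | succ k =>
    have h := hprefix (k + 1)
    rw [sum_range_succ, sum_range_succ _ (k + 1), hprefix k] at h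
    exact add_left_cancel h

theorem gramResidualLoss_lowerBidiag_eq (hx : ∀ k, n ≤ k → x k = 0) :
    gramResidualLoss (lowerBidiag d ρ) x = (1/2) * ∑ k ∈ range (n + 1),
      (gramMulVec (lowerBidiag d ρ) x k - if k = 0 then (1:ℝ) else 0) ^ 2 := by
  rw [gramResidualLoss, tsum_eq_sum (s := range (n + 1)) fun k hk => ?_]
  rw [mem_range, not_lt] at hk
  rw [gramMulVec_lowerBidiag_eq_zero hx (by omega), if_neg (by omega)]
  ring

theorem sum_range_succ_sq_pos (h0 : ρ 0 ≠ 0) (n : ℕ) : 0 < ∑ k ∈ range (n + 1), ρ k ^ 2 :=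
  (sq_pos_iff.2 h0).trans_le <|
    single_le_sum (fun k _ => sq_nonneg (ρ k)) (mem_range.2 n.succ_pos)

theorem div_le_gramResidualLoss_lowerBidiag (hρ : ∀ k, ρ k ≠ 0) (hx : ∀ k, n ≤ k → x k = 0) :
    ρ 0 ^ 2 / (2 * ∑ k ∈ range (n + 1), ρ k ^ 2) ≤ gramResidualLoss (lowerBidiag d ρ) x := by
  set F : ℕ → ℝ := fun k => gramMulVec (lowerBidiag d ρ) x k - if k = 0 then (1:ℝ) else 0
  have hFρ : ∑ k ∈ range (n + 1), F k * ρ k = -ρ 0 := by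
    have h := sum_range_mul_gramMulVec_lowerBidiag (d := d) hρ hx n
    simp only [lt_irrefl, if_false] at h
    simp only [F, sub_mul, sum_sub_distrib, ite_mul, one_mul, zero_mul, sum_ite_eq', mem_range]
    simp [mul_comm, h]
  have cs := sum_mul_sq_le_sq_mul_sq (range (n + 1)) F ρ
  rw [hFρ, neg_sq] at cs
  rw [gramResidualLoss_lowerBidiag_eq hx,
    div_le_iff₀ (by linarith [sum_range_succ_sq_pos (hρ 0) n])]
  linarith

theorem isLeast_gramResidualLoss_lowerBidiag (hd : ∀ k, d k ≠ 0) (hρ : ∀ k, ρ k ≠ 0) (n : ℕ) :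
    IsLeast {L | ∃ x : ℕ → ℝ, (∀ k, n ≤ k → x k = 0) ∧ L = gramResidualLoss (lowerBidiag d ρ) x}
      (ρ 0 ^ 2 / (2 * ∑ k ∈ range (n + 1), ρ k ^ 2)) := by
  refine ⟨?_, fun L ⟨x, hx, hL⟩ => hL ▸ div_le_gramResidualLoss_lowerBidiag hρ hx⟩
  set S := ∑ k ∈ range (n + 1), ρ k ^ 2 with hS_def
  have hS : S ≠ 0 := (sum_range_succ_sq_pos (hρ 0) n).ne'
  -- the equality case of Cauchy–Schwarz: the residual is `-(ρ 0 / S) • ρ` on `range (n + 1)`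
  set r : ℕ → ℝ := fun k => if k ≤ n then (if k = 0 then 1 else 0) - ρ 0 / S * ρ k else 0
  have hr : ∑ k ∈ range (n + 1), ρ k * r k = 0 := by
    have : ∀ k ∈ range (n + 1), ρ k * r k = (if k = 0 then ρ 0 else 0) - ρ 0 / S * ρ k ^ 2 := by
      intro k hk
      rw [mem_range] at hk
      simp only [r, if_pos (Nat.lt_succ_iff.1 hk)]
      split_ifs with h0 <;> [subst h0; skip] <;> ring
    rw [sum_congr rfl this, sum_sub_distrib, sum_ite_eq', if_pos (by simp), ← mul_sum, ← hS_def]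
    field_simp
    ring
  obtain ⟨x, hx, hxr⟩ := exists_gramMulVec_lowerBidiag_eq hd hρ hr
    fun k hk => if_neg (by omega)
  refine ⟨x, hx, ?_⟩
  rw [gramResidualLoss_lowerBidiag_eq hx, hxr]
  have : ∀ k ∈ range (n + 1), (r k - if k = 0 then (1:ℝ) else 0) ^ 2 = (ρ 0 / S) ^ 2 * ρ k ^ 2 := by
    intro k hk
    rw [mem_range] at hk
    simp only [r, if_pos (Nat.lt_succ_iff.1 hk)]
    ring
  rw [sum_congr rfl this, ← mul_sum, ← hS_def]
  field_simp

end LowerBidiag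

theorem cg_discrete_lower_bound_exact_loss_general
    (ν ζ : ℝ)
    (g : ℝ) (hg : g = (1 - (2 + ν) * ζ) / 2)
    (Jmat : ℕ → ℕ → ℝ)
    (hJ : ∀ i j : ℕ, Jmat i j =
      if j = i then ((i : ℝ) + 1) ^ (-(ν / 2))
      else if j + 1 = i then -((((i : ℝ) + 1) / (i : ℝ)) ^ g * (i : ℝ) ^ (-(ν / 2)))
      else 0)
    (Amat : ℕ → ℕ → ℝ)
    (hA : ∀ i j : ℕ, Amat i j = ∑' m : ℕ, Jmat i m * Jmat j m)
    (n : ℕ) :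
    IsLeast
      {L : ℝ | ∃ x : ℕ → ℝ, (∀ k : ℕ, n ≤ k → x k = 0) ∧
        L = (1/2) * ∑' k : ℕ,
          ((∑' j : ℕ, Amat k j * x j) - (if k = 0 then (1:ℝ) else 0)) ^ 2}
      ((2 * ∑ m ∈ Finset.range (n + 1), ((m : ℝ) + 1) ^ ((2 + ν) * ζ - 1))⁻¹) := by
  set d : ℕ → ℝ := fun k => ((k : ℝ) + 1) ^ (-(ν / 2))
  set ρ : ℕ → ℝ := fun k => ((k : ℝ) + 1) ^ (-g)
  have hJρ : Jmat = lowerBidiag d ρ := by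
    funext i j
    rw [hJ, lowerBidiag]
    split_ifs with _ hsub
    · rfl
    · subst hsub
      have hj : (0 : ℝ) ≤ j + 1 := by positivity
      have hj' : (0 : ℝ) ≤ j + 1 + 1 := by positivity
      simp only [d, ρ, Nat.cast_add, Nat.cast_one, Real.div_rpow hj' hj, Real.rpow_neg hj,
        Real.rpow_neg hj']
      field_simp
    · rfl
  obtain rfl : Amat = fun i j => ∑' m, Jmat i m * Jmat j m := funext₂ hA
  subst hJρ
  have hρsq (k : ℕ) : ρ k ^ 2 = ((k : ℝ) + 1) ^ ((2 + ν) * ζ - 1) := by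
    rw [← Real.rpow_mul_natCast (by positivity), hg]
    ring_nf
  have hpos (k : ℕ) : (0 : ℝ) < k + 1 := by positivity
  rw [show ((2 * ∑ m ∈ range (n + 1), ((m : ℝ) + 1) ^ ((2 + ν) * ζ - 1))⁻¹) =
      ρ 0 ^ 2 / (2 * ∑ k ∈ range (n + 1), ρ k ^ 2) by simp [hρsq, ρ]]
  exact isLeast_gramResidualLoss_lowerBidiag (fun k => (Real.rpow_pos_of_pos (hpos k) _).ne')
    (fun k => (Real.rpow_pos_of_pos (hpos k) _).ne') n

/-- Exact Conjugate Gradients losses for the explicit lower-bound operator: with the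
bidiagonal operator `J` (here `Jmat i j` is the matrix entry `J_{i+1,j+1}`, so
`Jmat 0 0 = 1`, `Jmat i i = (i+1)^{-ν/2}`, `Jmat i (i-1) = -((i+1)/i)^g i^{-ν/2}` with
`g = (1-(2+ν)ζ)/2`) and `Ã = J Jᵀ`, the minimum of `(1/2)‖Ãx - e₁‖²` over sequences `x`
supported on the first `n` coordinates equals `(2 Σ_{m=1}^{n+1} m^{(2+ν)ζ-1})⁻¹`. -/
theorem cg_discrete_lower_bound_exact_loss
    (ν ζ : ℝ) (hν : 0 < ν) (hζ : 0 < ζ)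
    (g : ℝ) (hg : g = (1 - (2 + ν) * ζ) / 2)
    (Jmat : ℕ → ℕ → ℝ)
    (hJ : ∀ i j : ℕ, Jmat i j =
      if j = i then ((i : ℝ) + 1) ^ (-(ν / 2))
      else if j + 1 = i then -((((i : ℝ) + 1) / (i : ℝ)) ^ g * (i : ℝ) ^ (-(ν / 2)))
      else 0)
    (Amat : ℕ → ℕ → ℝ)
    (hA : ∀ i j : ℕ, Amat i j = ∑' m : ℕ, Jmat i m * Jmat j m)
    (n : ℕ) (hn : 1 ≤ n) :
    IsLeast
      {L : ℝ | ∃ x : ℕ → ℝ, (∀ k : ℕ, n ≤ k → x k = 0) ∧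
        L = (1/2) * ∑' k : ℕ,
          ((∑' j : ℕ, Amat k j * x j) - (if k = 0 then (1:ℝ) else 0)) ^ 2}
      ((2 * ∑ m ∈ Finset.range (n + 1), ((m : ℝ) + 1) ^ ((2 + ν) * ζ - 1))⁻¹) :=
  cg_discrete_lower_bound_exact_loss_general ν ζ g hg Jmat hJ Amat hA n
end
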